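/- arXiv:0911.2766 — 7 statements merged into one kernel-verified Lean document; each statement's English description precedes it below -/
import Mathlib

section
/- There is a universal constant C > 0 such that for every α ∈ ℝ and every F ∈ Ŝ_{α,0}: the half-plane H_C is contained in the image F(H_0), the inverse map F^{−1} is univalent on H_C, and for every z with Im z ≥ C one has |F^{−1}(z) − (z − α)| ≤ C·e^{−2π Im z} and |(F^{−1})′(z) − 1| ≤ C·e^{−2π Im z}. -/
/-- `Ŝ_{α,y}`: the set of maps `F` univalent (holomorphic and injective) on the half-plane
`H_y = {Im z > y}`, commuting with the translation by one, and with
`F(z) - (z + α) → 0` as `Im z → +∞`, uniformly in `Re z`. -/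
def SHat (α y : ℝ) (F : ℂ → ℂ) : Prop :=
  DifferentiableOn ℂ F {z : ℂ | y < z.im} ∧
  Set.InjOn F {z : ℂ | y < z.im} ∧
  (∀ z : ℂ, y < z.im → F (z + 1) = F z + 1) ∧
  (∀ ε : ℝ, 0 < ε → ∃ Y : ℝ, y < Y ∧ ∀ z : ℂ, Y ≤ z.im → ‖F z - (z + (α : ℂ))‖ ≤ ε)

/-!
For `F ∈ Ŝ_{α,0}`, Bloch's theorem (proved here via Landau's lemma) shows that `F` maps a small
disc around any point `z` of `H_{1/2}` onto a set containing a disc of radius `c |F'(z)|`.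
If that radius exceeded `1/2`, the points `F(a) ± 1/2` would have preimages `u`, `v` at distance
less than `1`, while `F(u + 1) = F(v)` forces `v = u + 1` by injectivity; hence `|F'| ≤ 128`
on `H_{1/2}`. Now `F' - 1` is a bounded holomorphic function of `q = e^{2πiz}` vanishing at
`q = 0`, so the Schwarz lemma gives `|F' - 1| ≤ K e^{-2π Im z}` with a universal `K`, and
integrating along vertical rays gives the same bound for `F(z) - (z + α)`. High enough, `F` is
`1/8`-close to the translation by `α`, so the minimum modulus principle produces a preimage of
every point; by injectivity and the inverse function theorem this right inverse is holomorphic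
with derivative `1 / F' ∘ F⁻¹`, and both estimates transfer to it.
-/

open Complex Metric Set Filter Function Topology
open scoped Real

namespace Complex

theorem exists_mem_ball_eq_of_norm_sub_lt {f : ℂ → ℂ} {c w : ℂ} {r m : ℝ} (hr : 0 < r)
    (hd : DifferentiableOn ℂ f (closedBall c r)) (hc : ‖f c - w‖ < m)
    (hsphere : ∀ z ∈ sphere c r, m ≤ ‖f z - w‖) : ∃ z ∈ ball c r, f z = w := by
  by_contra! hball
  have hm : 0 < m := (norm_nonneg _).trans_lt hc
  have hne : ∀ z ∈ closedBall c r, f z - w ≠ 0 := by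
    intro z hz
    rcases (mem_closedBall.1 hz).lt_or_eq with hz | hz
    · exact sub_ne_zero.2 (hball z (mem_ball.2 hz))
    · exact norm_pos_iff.1 (hm.trans_le (hsphere z (mem_sphere.2 hz)))
  have hinv : ‖(f c - w)⁻¹‖ ≤ m⁻¹ := by
    refine norm_le_of_forall_mem_frontier_norm_le isBounded_ball
      (((hd.sub_const w).inv hne).diffContOnCl_ball subset_rfl) (fun z hz => ?_)
      (subset_closure (mem_ball_self hr))
    rw [frontier_ball c hr.ne'] at hz
    rw [Pi.inv_apply, norm_inv]
    exact inv_anti₀ hm (hsphere z hz)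
  rw [norm_inv] at hinv
  exact hc.not_ge ((inv_le_inv₀ (norm_pos_iff.2 (hne c (mem_closedBall_self hr.le))) hm).1 hinv)

theorem mul_sub_le_norm_sub_apply_zero {f : ℂ → ℂ} {A : ℝ}
    (hd : DifferentiableOn ℂ f (ball 0 1)) (hA : ∀ z ∈ ball (0 : ℂ) 1, ‖f z - f 0‖ ≤ A)
    {z : ℂ} (hz : z ∈ ball (0 : ℂ) 1) :
    ‖z‖ * (‖deriv f 0‖ - 2 * A * ‖z‖) ≤ ‖f z - f 0‖ := by
  have hnhds : ball (0 : ℂ) 1 ∈ 𝓝 0 := ball_mem_nhds 0 one_pos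
  set f₁ := dslope f 0
  have hf₁ : ∀ u ∈ ball (0 : ℂ) 1, ‖f₁ u‖ ≤ A := fun u hu => by
    simpa using norm_dslope_le_div_of_mapsTo_ball hd (fun v hv => mem_closedBall_iff_norm.2
      (hA v hv)) hu
  have hf₁d : DifferentiableOn ℂ f₁ (ball 0 1) := (differentiableOn_dslope hnhds).2 hd
  have hf₁₁ : ∀ u ∈ ball (0 : ℂ) 1, ‖dslope f₁ 0 u‖ ≤ 2 * A := fun u hu => by
    refine (norm_dslope_le_div_of_mapsTo_ball hf₁d (fun v hv => ?_) hu).trans_eq (div_one _)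
    rw [mem_closedBall_iff_norm]
    linarith [norm_sub_le (f₁ v) (f₁ 0), hf₁ v hv, hf₁ 0 (mem_ball_self one_pos)]
  have hf : f z - f 0 = z * f₁ z := by simpa using (sub_smul_dslope f 0 z).symm
  have hf₁z : f₁ z = deriv f 0 + z * dslope f₁ 0 z := by
    have := sub_smul_dslope f₁ 0 z
    simp only [sub_zero, smul_eq_mul, f₁, dslope_same] at this
    linear_combination -this
  have hzle : ‖z * dslope f₁ 0 z‖ ≤ ‖z‖ * (2 * A) := by
    rw [norm_mul]; exact mul_le_mul_of_nonneg_left (hf₁₁ z hz) (norm_nonneg z)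
  rw [hf, norm_mul, hf₁z]
  refine mul_le_mul_of_nonneg_left ?_ (norm_nonneg z)
  linarith [norm_sub_le_norm_add (deriv f 0) (z * dslope f₁ 0 z)]

theorem ball_subset_image_ball_of_norm_sub_le {f : ℂ → ℂ} {A : ℝ}
    (hd : DifferentiableOn ℂ f (ball 0 1)) (hA : ∀ z ∈ ball (0 : ℂ) 1, ‖f z - f 0‖ ≤ A) :
    ball (f 0) (‖deriv f 0‖ ^ 2 / (16 * A)) ⊆ f '' ball 0 1 := by
  intro w hw
  set μ := ‖deriv f 0‖
  have hrad : 0 < μ ^ 2 / (16 * A) := dist_nonneg.trans_lt hw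
  have hμA : μ ≤ A := by
    simpa using norm_deriv_le_div_of_mapsTo_ball hd
      (fun v hv => mem_closedBall_iff_norm.2 (hA v hv)) one_pos
  have hμ : 0 < μ := by
    by_contra! h
    rw [le_antisymm h (norm_nonneg _)] at hrad
    norm_num at hrad
  have hA0 : 0 < A := hμ.trans_le hμA
  -- the radius maximizing the lower bound of `mul_sub_le_norm_sub_apply_zero`
  set r := μ / (4 * A)
  have hr : 0 < r := by positivity
  have hr4 : r ≤ 1 / 4 := by
    rw [div_le_iff₀ (by positivity)]; linarith
  have hlow : r * (μ - 2 * A * r) = 2 * (μ ^ 2 / (16 * A)) := by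
    simp only [r]; field_simp; ring
  obtain ⟨z, hz, rfl⟩ := exists_mem_ball_eq_of_norm_sub_lt hr
    (hd.mono (closedBall_subset_ball (by linarith))) (by rwa [← dist_eq_norm, dist_comm])
    fun z hz => by
      have hzr : ‖z‖ = r := by simpa using hz
      have := mul_sub_le_norm_sub_apply_zero hd hA (z := z) (mem_ball_zero_iff.2 (by linarith))
      rw [hzr, hlow] at this
      linarith [norm_sub_le_norm_sub_add_norm_sub (f z) w (f 0), mem_ball_iff_norm.1 hw]
  exact ⟨z, ball_subset_ball (by linarith) hz, rfl⟩

theorem ball_subset_image_ball_of_norm_deriv_le {f : ℂ → ℂ} {a : ℂ} {ρ M : ℝ}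
    (hρ : 0 < ρ) (hd : DifferentiableOn ℂ f (ball a ρ)) (hM : ∀ z ∈ ball a ρ, ‖deriv f z‖ ≤ M) :
    ball (f a) (ρ * ‖deriv f a‖ ^ 2 / (16 * M)) ⊆ f '' ball a ρ := by
  set e : ℂ → ℂ := fun ζ => a + ρ * ζ
  have he : MapsTo e (ball 0 1) (ball a ρ) := fun ζ hζ => by
    simpa [e, abs_of_pos hρ, hρ] using hζ
  have hfd : ∀ z ∈ ball a ρ, DifferentiableAt ℂ f z :=
    fun z hz => hd.differentiableAt (isOpen_ball.mem_nhds hz)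
  have hge : HasDerivAt (f ∘ e) (deriv f a * ρ) 0 := by
    have := (hfd a (mem_ball_self hρ)).hasDerivAt.comp_of_eq (0 : ℂ)
      (((hasDerivAt_id (0 : ℂ)).const_mul (ρ : ℂ)).const_add a) (by simp)
    simpa using this
  have hg := ball_subset_image_ball_of_norm_sub_le (f := f ∘ e) (A := M * ρ)
    (hd.comp (by fun_prop) he) fun ζ hζ => by
      have := (convex_ball a ρ).norm_image_sub_le_of_norm_deriv_le hfd hM (mem_ball_self hρ)
        (he hζ)
      simp only [comp_apply, e, mul_zero, add_zero, add_sub_cancel_left, norm_mul, norm_real,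
        Real.norm_eq_abs, abs_of_pos hρ] at this ⊢
      have hM0 : 0 ≤ M * ρ := mul_nonneg ((norm_nonneg _).trans (hM a (mem_ball_self hρ))) hρ.le
      nlinarith [mul_le_mul_of_nonneg_left (mem_ball_zero_iff.1 hζ).le hM0]
  have hrad : ‖deriv (f ∘ e) 0‖ ^ 2 / (16 * (M * ρ)) = ρ * ‖deriv f a‖ ^ 2 / (16 * M) := by
    rw [hge.deriv, norm_mul, norm_real, Real.norm_eq_abs, abs_of_pos hρ,
      show (‖deriv f a‖ * ρ) ^ 2 = ρ * (ρ * ‖deriv f a‖ ^ 2) by ring,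
      show 16 * (M * ρ) = ρ * (16 * M) by ring, mul_div_mul_left _ _ hρ.ne', mul_div_assoc]
  rw [hrad, comp_apply, show e 0 = a by simp [e], image_comp] at hg
  exact hg.trans (image_mono he.image_subset)

theorem exists_ball_subset_image_ball {f : ℂ → ℂ} {z₀ : ℂ} {R : ℝ} (hR : 0 < R)
    (hd : DifferentiableOn ℂ f (ball z₀ (2 * R))) :
    ∃ a ∈ ball z₀ R, ball (f a) (R * ‖deriv f z₀‖ / 64) ⊆ f '' ball a R := by
  rcases (norm_nonneg (deriv f z₀)).eq_or_lt with h0 | hμ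
  · exact ⟨z₀, mem_ball_self hR, by simp [← h0]⟩
  -- Bloch's trick: maximize `(R - ‖z - z₀‖) ‖f' z‖`; near the maximum point `a`, `‖f'‖` is at
  -- most twice `‖f' a‖` on a disc whose radius is comparable to the weight at `a`
  have hcont : ContinuousOn (fun z => (R - ‖z - z₀‖) * ‖deriv f z‖) (closedBall z₀ R) :=
    (by fun_prop : Continuous fun z => R - ‖z - z₀‖).continuousOn.mul
      (((hd.analyticOnNhd isOpen_ball).deriv.continuousOn).mono
        (closedBall_subset_ball (by linarith))).norm
  obtain ⟨a, ha, hmax⟩ := (isCompact_closedBall z₀ R).exists_isMaxOn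
    ⟨z₀, mem_closedBall_self hR.le⟩ hcont
  set m := (R - ‖a - z₀‖) * ‖deriv f a‖
  have hm : R * ‖deriv f z₀‖ ≤ m := by simpa using hmax (mem_closedBall_self hR.le)
  have haR : ‖a - z₀‖ < R := by
    by_contra! h
    nlinarith [norm_nonneg (deriv f a)]
  set ρ := (R - ‖a - z₀‖) / 2 with hρdef
  have hρ : 0 < ρ := by linarith
  have hρR : ρ ≤ R := by linarith [norm_nonneg (a - z₀)]
  have hball : ∀ z ∈ ball a ρ, z ∈ closedBall z₀ R ∧ ρ ≤ R - ‖z - z₀‖ := fun z hz => by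
    have htri := norm_sub_le_norm_sub_add_norm_sub z a z₀
    have hza := mem_ball_iff_norm.1 hz
    exact ⟨mem_closedBall_iff_norm.2 (by linarith), by linarith⟩
  have hM : ∀ z ∈ ball a ρ, ‖deriv f z‖ ≤ m / ρ := fun z hz => by
    rw [le_div_iff₀ hρ]
    have : (R - ‖z - z₀‖) * ‖deriv f z‖ ≤ m := hmax (hball z hz).1
    nlinarith [(hball z hz).2, norm_nonneg (deriv f z)]
  have himage := ball_subset_image_ball_of_norm_deriv_le hρ
    (hd.mono fun z hz => closedBall_subset_ball (by linarith) (hball z hz).1) hM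
  have hrad : ρ * ‖deriv f a‖ ^ 2 / (16 * (m / ρ)) = m / 64 := by
    simp only [m, ρ] at hρ ⊢
    field_simp
    ring
  rw [hrad] at himage
  exact ⟨a, mem_ball_iff_norm.2 haR, (ball_subset_ball (by linarith)).trans
    (himage.trans (image_mono (ball_subset_ball hρR)))⟩

theorem im_le_im_add_norm_sub (w z : ℂ) : z.im ≤ w.im + ‖w - z‖ := by
  have := neg_abs_le (w - z).im
  linarith [abs_im_le_norm (w - z), sub_im w z]

theorem norm_deriv_le_of_injOn_of_add_one {f : ℂ → ℂ} (hd : DifferentiableOn ℂ f {z | 0 < z.im})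
    (hinj : InjOn f {z | 0 < z.im}) (hper : ∀ z, 0 < z.im → f (z + 1) = f z + 1) {z : ℂ}
    (hz : 1 / 2 < z.im) : ‖deriv f z‖ ≤ 128 := by
  by_contra! hbig
  have hhalf : ∀ w ∈ ball z (2 * (1 / 4)), 0 < w.im := fun w hw => by
    linarith [im_le_im_add_norm_sub w z, mem_ball_iff_norm.1 hw]
  obtain ⟨a, ha, himage⟩ := exists_ball_subset_image_ball (by norm_num) (hd.mono hhalf)
  have hmem : ∀ s : ℂ, ‖s‖ = 1 / 2 → f a + s ∈ ball (f a) (1 / 4 * ‖deriv f z‖ / 64) := by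
    intro s hs
    rw [mem_ball_iff_norm, add_sub_cancel_left, hs]
    linarith
  obtain ⟨u, hu, hfu⟩ := himage (hmem (-1 / 2) (by norm_num))
  obtain ⟨v, hv, hfv⟩ := himage (hmem (1 / 2) (by norm_num))
  have hnear : ∀ w ∈ ball a (1 / 4), w ∈ ball z (2 * (1 / 4)) := fun w hw => by
    rw [mem_ball_iff_norm] at *
    linarith [norm_sub_le_norm_sub_add_norm_sub w a z]
  have hu0 := hhalf u (hnear u hu)
  have huv : u + 1 = v := hinj (by simpa using hu0) (hhalf v (hnear v hv)) (by
    rw [hper u hu0, hfu, hfv]; ring)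
  have hvu : ‖v - u‖ = 1 := by rw [← huv, add_sub_cancel_left, norm_one]
  linarith [norm_sub_le_norm_sub_add_norm_sub v a u, norm_sub_rev a u, mem_ball_iff_norm.1 hu,
    mem_ball_iff_norm.1 hv]

theorem _root_.Function.Periodic.norm_le_mul_exp {g : ℂ → ℂ} {y₀ B : ℝ} (hper : Periodic g 1)
    (hd : ∀ z : ℂ, y₀ < z.im → DifferentiableAt ℂ g z) (hB : ∀ z : ℂ, y₀ < z.im → ‖g z‖ ≤ B)
    (hzero : ZeroAtFilter (comap im atTop) g) {z : ℂ} (hz : y₀ < z.im) :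
    ‖g z‖ ≤ B * Real.exp (2 * π * y₀) * Real.exp (-2 * π * z.im) := by
  -- Schwarz lemma for the cusp function `G (e^{2πiz}) = g z` on the disc of radius `e^{-2πy₀}`
  set r := Real.exp (-2 * π * y₀)
  have him : ∀ q : ℂ, q ≠ 0 → ‖q‖ < r → y₀ < (Periodic.invQParam 1 q).im := fun q hq hqr => by
    have hlog : Real.log ‖q‖ < -2 * π * y₀ := (Real.log_lt_iff_lt_exp (norm_pos_iff.2 hq)).2 hqr
    rw [Periodic.im_invQParam, div_mul_eq_mul_div, lt_div_iff₀ (by positivity)]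
    linarith
  set G := Periodic.cuspFunction 1 g
  have hG0 : G 0 = 0 := Periodic.cuspFunction_zero_of_zero_at_inf one_pos hzero
  have hGd : DifferentiableOn ℂ G (ball 0 r) := fun q hq => by
    rcases eq_or_ne q 0 with rfl | hq0
    · exact (Periodic.differentiableAt_cuspFunction_zero one_pos hper
        (eventually_of_mem (preimage_mem_comap (Ioi_mem_atTop y₀)) hd)
        hzero.boundedAtFilter).differentiableWithinAt
    · have := Periodic.differentiableAt_cuspFunction one_ne_zero hper
        (hd _ (him q hq0 (mem_ball_zero_iff.1 hq)))
      rw [Periodic.qParam_right_inv one_ne_zero hq0] at this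
      exact this.differentiableWithinAt
  have hGmaps : MapsTo G (ball 0 r) (closedBall (G 0) B) := fun q hq => by
    rw [hG0, mem_closedBall_zero_iff]
    rcases eq_or_ne q 0 with rfl | hq0
    · simpa [hG0] using (norm_nonneg _).trans (hB z hz)
    · rw [show G q = g (Periodic.invQParam 1 q) from Periodic.cuspFunction_eq_of_nonzero _ _ hq0]
      exact hB _ (him q hq0 (mem_ball_zero_iff.1 hq))
  have hqz : ‖Periodic.qParam 1 z‖ = Real.exp (-2 * π * z.im) := by
    simp [Periodic.norm_qParam]
  have hqr : Periodic.qParam 1 z ∈ ball 0 r := by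
    rw [mem_ball_zero_iff, hqz]
    exact Real.exp_lt_exp.2 (by nlinarith [Real.pi_pos])
  have hschwarz := dist_le_div_mul_dist_of_mapsTo_ball hGd hGmaps hqr
  rw [show G (Periodic.qParam 1 z) = g z from Periodic.eq_cuspFunction one_ne_zero hper z, hG0,
    dist_zero_right, dist_zero_right, hqz, div_eq_mul_inv, ← Real.exp_neg] at hschwarz
  exact hschwarz.trans_eq (by ring_nf)

theorem norm_le_mul_exp_of_apply_add_one {g : ℂ → ℂ} {y₀ B : ℝ}
    (hd : ∀ z : ℂ, y₀ < z.im → DifferentiableAt ℂ g z)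
    (hper : ∀ z : ℂ, y₀ < z.im → g (z + 1) = g z) (hB : ∀ z : ℂ, y₀ < z.im → ‖g z‖ ≤ B)
    (hzero : Tendsto g (comap im atTop) (𝓝 0)) {z : ℂ} (hz : y₀ < z.im) :
    ‖g z‖ ≤ B * Real.exp (2 * π * y₀) * Real.exp (-2 * π * z.im) := by
  set H : ℂ → ℂ := fun w => if y₀ < w.im then g w else 0
  have hHg : ∀ w : ℂ, y₀ < w.im → H w = g w := fun w hw => if_pos hw
  have hHper : Periodic H 1 := fun w => by
    by_cases hw : y₀ < w.im
    · rw [hHg w hw, hHg (w + 1) (by simpa using hw), hper w hw]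
    · simp [H, hw]
  have hopen : IsOpen {w : ℂ | y₀ < w.im} := isOpen_lt continuous_const continuous_im
  have := hHper.norm_le_mul_exp (y₀ := y₀) (B := B)
    (fun w hw => (hd w hw).congr_of_eventuallyEq (eventually_of_mem (hopen.mem_nhds hw) hHg))
    (fun w hw => (hHg w hw).symm ▸ hB w hw)
    (hzero.congr' <| eventually_of_mem (preimage_mem_comap (Ioi_mem_atTop y₀))
      fun w hw => (hHg w hw).symm) hz
  rwa [hHg z hz] at this

theorem norm_sub_le_of_norm_deriv_le_exp {g : ℂ → ℂ} {y₀ D : ℝ}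
    (hd : ∀ z : ℂ, y₀ < z.im → DifferentiableAt ℂ g z)
    (hD : ∀ z : ℂ, y₀ < z.im → ‖deriv g z‖ ≤ D * Real.exp (-2 * π * z.im)) {z : ℂ}
    (hz : y₀ < z.im) (N : ℕ) : ‖g z - g (z + N * I)‖ ≤ 2 * D * Real.exp (-2 * π * z.im) := by
  have hD0 : 0 ≤ D := nonneg_of_mul_nonneg_left ((norm_nonneg _).trans (hD z hz)) (Real.exp_pos _)
  set c := D * Real.exp (-2 * π * z.im)
  set t := Real.exp (-2 * π)
  set v : ℕ → ℂ := fun n => g (z + n * I)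
  have hstep : ∀ n : ℕ, ‖v n - v (n + 1)‖ ≤ c * t ^ n := fun n => by
    have hct : c * t ^ n = D * Real.exp (-2 * π * (z.im + n)) := by
      simp only [c, t]
      rw [← Real.exp_nat_mul, mul_assoc, ← Real.exp_add]
      ring_nf
    have hn : ∀ w ∈ {w : ℂ | z.im + n ≤ w.im}, y₀ < w.im := fun w hw => by
      linarith [hw.out, (n.cast_nonneg : (0 : ℝ) ≤ n)]
    have hs : ∀ w ∈ {w : ℂ | z.im + n ≤ w.im}, ‖deriv g w‖ ≤ c * t ^ n := fun w hw => by
      rw [hct]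
      refine (hD w (hn w hw)).trans (mul_le_mul_of_nonneg_left (Real.exp_le_exp.2 ?_) hD0)
      nlinarith [Real.pi_pos, hw.out]
    have := Convex.norm_image_sub_le_of_norm_deriv_le (fun w hw => hd w (hn w hw)) hs
      (convex_halfSpace_im_ge _) (x := z + (n + 1 : ℕ) * I) (y := z + n * I) (by simp) (by simp)
    have hI : ‖(n : ℂ) * I - (n + 1) * I‖ = 1 := by simp [← sub_mul]
    simpa [v, hI] using this
  have ht : t ≤ 1 / 2 := by
    rw [show t = Real.exp (-(2 * π)) by simp only [t, neg_mul], Real.exp_neg,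
      inv_le_comm₀ (Real.exp_pos _) (by norm_num)]
    linarith [Real.add_one_le_exp (2 * π), Real.pi_gt_three]
  have hc0 : 0 ≤ c := by positivity
  have hsum : ‖v 0 - v N‖ ≤ 2 * c := by
    rw [← Finset.sum_range_sub']
    calc ‖∑ n ∈ Finset.range N, (v n - v (n + 1))‖
        ≤ ∑ n ∈ Finset.range N, c * (1 / 2) ^ n := norm_sum_le_of_le _ fun n _ =>
          (hstep n).trans (mul_le_mul_of_nonneg_left (pow_le_pow_left₀ (by positivity) ht n) hc0)
      _ ≤ 2 * c := by
          rw [← Finset.mul_sum, mul_comm]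
          exact mul_le_mul_of_nonneg_right (sum_geometric_two_le N) hc0
  simpa [v, c, mul_assoc] using hsum

theorem norm_le_of_norm_deriv_le_exp {g : ℂ → ℂ} {y₀ D : ℝ}
    (hd : ∀ z : ℂ, y₀ < z.im → DifferentiableAt ℂ g z)
    (hD : ∀ z : ℂ, y₀ < z.im → ‖deriv g z‖ ≤ D * Real.exp (-2 * π * z.im))
    (hzero : Tendsto g (comap im atTop) (𝓝 0)) {z : ℂ} (hz : y₀ < z.im) :
    ‖g z‖ ≤ 2 * D * Real.exp (-2 * π * z.im) := by
  have hv : Tendsto (fun N : ℕ => g (z + N * I)) atTop (𝓝 0) :=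
    hzero.comp <| tendsto_comap_iff.2 <| by
      simpa [comp_def] using tendsto_atTop_add_const_left _ z.im tendsto_natCast_atTop_atTop
  have hlim : Tendsto (fun N : ℕ => ‖g z - g (z + N * I)‖) atTop (𝓝 ‖g z‖) := by
    simpa using (tendsto_const_nhds.sub hv).norm
  exact le_of_tendsto' hlim (norm_sub_le_of_norm_deriv_le_exp hd hD hz)

theorem tendsto_deriv_comap_im_atTop {g : ℂ → ℂ} {y₀ : ℝ}
    (hd : DifferentiableOn ℂ g {z | y₀ < z.im}) (hg : Tendsto g (comap im atTop) (𝓝 0)) :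
    Tendsto (deriv g) (comap im atTop) (𝓝 0) := by
  rw [NormedAddGroup.tendsto_nhds_zero] at hg ⊢
  intro ε hε
  obtain ⟨Y, hY⟩ := eventually_atTop.1 (eventually_comap.1 (hg (ε / 2) (half_pos hε)))
  filter_upwards [preimage_mem_comap (Ici_mem_atTop (max Y y₀ + 2))] with z (hz : _ ≤ z.im)
  have hball : closedBall z 1 ⊆ {w | y₀ < w.im} := fun w hw => by
    show y₀ < w.im
    linarith [im_le_im_add_norm_sub w z, mem_closedBall_iff_norm.1 hw, le_max_right Y y₀]
  have hcauchy : ‖deriv g z‖ ≤ ε / 2 / 1 :=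
    norm_deriv_le_of_forall_mem_sphere_norm_le one_pos (hd.diffContOnCl_ball hball) fun w hw =>
      (hY w.im (by linarith [im_le_im_add_norm_sub w z, mem_sphere_iff_norm.1 hw,
        le_max_left Y y₀]) w rfl).le
  linarith

theorem exists_mem_ball_eq_of_norm_sub_add_le {f : ℂ → ℂ} {α T : ℝ}
    (hd : DifferentiableOn ℂ f {z | T ≤ z.im}) (hf : ∀ z : ℂ, T ≤ z.im → ‖f z - (z + α)‖ ≤ 1 / 8)
    {w : ℂ} (hw : T + 1 / 2 ≤ w.im) : ∃ z ∈ ball (w - α) (1 / 2), f z = w := by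
  have hc : (w - α).im = w.im := by simp
  have hball : ∀ u ∈ closedBall (w - α) (1 / 2), T ≤ u.im := fun u hu => by
    linarith [im_le_im_add_norm_sub u (w - α), mem_closedBall_iff_norm.1 hu]
  refine exists_mem_ball_eq_of_norm_sub_lt (m := 1 / 4) (by norm_num) (hd.mono hball) ?_
    fun u hu => ?_
  · have := hf (w - α) (by linarith)
    rw [sub_add_cancel] at this
    linarith
  · have hfu := hf u (hball u (sphere_subset_closedBall hu))
    have hu : ‖(f u - w) - (f u - (u + α))‖ = 1 / 2 := by
      rw [show (f u - w) - (f u - (u + α)) = u - (w - α) by ring]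
      exact mem_sphere_iff_norm.1 hu
    linarith [norm_sub_le (f u - w) (f u - (u + α))]

end Complex

theorem HasStrictDerivAt.hasDerivAt_of_injOn {𝕜 : Type*} [NontriviallyNormedField 𝕜]
    [CompleteSpace 𝕜] {f g : 𝕜 → 𝕜} {f' : 𝕜} {U : Set 𝕜} {w : 𝕜}
    (hf : HasStrictDerivAt f f' (g w)) (hf' : f' ≠ 0) (hU : U ∈ 𝓝 (g w)) (hinj : InjOn f U)
    (hg : ∀ᶠ x in 𝓝 w, g x ∈ U ∧ f (g x) = x) : HasDerivAt g f'⁻¹ w := by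
  have hw : f (g w) = w := hg.self_of_nhds.2
  set L := hf.localInverse f f' (g w) hf'
  have hL : HasStrictDerivAt L f'⁻¹ w := hw ▸ hf.to_localInverse hf'
  have hLw : L w = g w := by simpa [hw] using (hf.eventually_left_inverse hf').self_of_nhds
  have hLU : ∀ᶠ x in 𝓝 w, L x ∈ U := hL.hasDerivAt.continuousAt.eventually_mem (hLw ▸ hU)
  have hfL : ∀ᶠ x in 𝓝 w, f (L x) = x := hw ▸ hf.eventually_right_inverse hf'
  refine hL.hasDerivAt.congr_of_eventuallyEq ?_
  filter_upwards [hg, hLU, hfL] with x ⟨hgU, hfg⟩ hLU hfL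
  exact hinj hgU hLU (hfg.trans hfL.symm)

theorem norm_inv_sub_one_le {𝕜 : Type*} [NormedField 𝕜] {d : 𝕜} (h : ‖d - 1‖ ≤ 1 / 2) :
    ‖d⁻¹ - 1‖ ≤ 2 * ‖d - 1‖ := by
  have hd : 1 / 2 ≤ ‖d‖ := by
    linarith [norm_sub_norm_le (1 : 𝕜) d, norm_sub_rev d 1, norm_one (α := 𝕜)]
  have hd0 : d ≠ 0 := norm_pos_iff.1 (by linarith)
  rw [show d⁻¹ - 1 = d⁻¹ * (1 - d) by field_simp, norm_mul, norm_inv, norm_sub_rev,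
    inv_mul_le_iff₀ (by linarith)]
  nlinarith [norm_nonneg (d - 1)]

theorem mul_exp_neg_two_pi_mul_le {K t : ℝ} (hK : 0 ≤ K) (ht : 8 * K ≤ t) :
    K * Real.exp (-2 * π * t) ≤ 1 / 8 := by
  have h : 8 * K ≤ Real.exp (2 * π * t) := ht.trans (by
    nlinarith [Real.add_one_le_exp (2 * π * t), Real.pi_gt_three])
  rw [show -2 * π * t = -(2 * π * t) by ring, Real.exp_neg, ← div_eq_mul_inv,
    div_le_iff₀ (Real.exp_pos _)]
  linarith

theorem exp_neg_two_pi_mul_le {a b : ℝ} (h : b - 1 / 2 ≤ a) :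
    Real.exp (-2 * π * a) ≤ Real.exp π * Real.exp (-2 * π * b) := by
  rw [← Real.exp_add, Real.exp_le_exp]
  nlinarith [Real.pi_pos]

namespace SHat

variable {α : ℝ} {F : ℂ → ℂ}

noncomputable def decayConst : ℝ := 129 * Real.exp π

theorem decayConst_pos : 0 < decayConst := by
  rw [decayConst]; positivity

theorem tendsto_sub (hF : SHat α 0 F) :
    Tendsto (fun z => F z - (z + α)) (comap im atTop) (𝓝 0) := by
  rw [NormedAddGroup.tendsto_nhds_zero]
  intro ε hε
  obtain ⟨Y, -, hY⟩ := hF.2.2.2 (ε / 2) (half_pos hε)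
  filter_upwards [preimage_mem_comap (Ici_mem_atTop Y)] with z hz
  exact (hY z hz).trans_lt (half_lt_self hε)

theorem differentiableAt (hF : SHat α 0 F) {z : ℂ} (hz : 0 < z.im) : DifferentiableAt ℂ F z :=
  hF.1.differentiableAt ((isOpen_lt continuous_const continuous_im).mem_nhds hz)

theorem hasDerivAt_sub (hF : SHat α 0 F) {z : ℂ} (hz : 0 < z.im) :
    HasDerivAt (fun z => F z - (z + α)) (deriv F z - 1) z :=
  (hF.differentiableAt hz).hasDerivAt.sub ((hasDerivAt_id z).add_const _)

theorem deriv_add_one (hF : SHat α 0 F) {z : ℂ} (hz : 0 < z.im) :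
    deriv F (z + 1) = deriv F z := by
  have hev : (fun w => F (w + 1)) =ᶠ[𝓝 z] fun w => F w + 1 :=
    eventually_of_mem ((isOpen_lt continuous_const continuous_im).mem_nhds hz) fun w hw =>
      hF.2.2.1 w hw
  rw [← deriv_comp_add_const, hev.deriv_eq, deriv_add_const]

theorem norm_deriv_sub_one_le (hF : SHat α 0 F) {z : ℂ} (hz : 1 / 2 < z.im) :
    ‖deriv F z - 1‖ ≤ decayConst * Real.exp (-2 * π * z.im) := by
  have hpos : ∀ w : ℂ, 1 / 2 < w.im → 0 < w.im := fun w hw => by linarith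
  have hderiv : ∀ w : ℂ, 1 / 2 < w.im → DifferentiableAt ℂ (fun w => deriv F w - 1) w :=
    fun w hw => ((hF.1.analyticOnNhd (isOpen_lt continuous_const continuous_im)).deriv w
      (hpos w hw)).differentiableAt.sub_const 1
  have hzero : Tendsto (fun w => deriv F w - 1) (comap im atTop) (𝓝 0) :=
    (tendsto_deriv_comap_im_atTop (fun w hw => (hF.hasDerivAt_sub hw).differentiableAt
      |>.differentiableWithinAt) hF.tendsto_sub).congr' <|
      eventually_of_mem (preimage_mem_comap (Ioi_mem_atTop 0)) fun w hw =>
        (hF.hasDerivAt_sub hw).deriv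
  have := norm_le_mul_exp_of_apply_add_one (B := 129) hderiv
    (fun w hw => by rw [hF.deriv_add_one (hpos w hw)]) (fun w hw => ?_) hzero hz
  · rwa [show 2 * π * (1 / 2) = π by ring] at this
  · linarith [norm_sub_le (deriv F w) 1, norm_one (α := ℂ),
      norm_deriv_le_of_injOn_of_add_one hF.1 hF.2.1 hF.2.2.1 hw]

theorem norm_sub_le (hF : SHat α 0 F) {z : ℂ} (hz : 1 / 2 < z.im) :
    ‖F z - (z + α)‖ ≤ 2 * decayConst * Real.exp (-2 * π * z.im) :=
  norm_le_of_norm_deriv_le_exp (fun w hw => (hF.hasDerivAt_sub (by linarith)).differentiableAt)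
    (fun w hw => by rw [(hF.hasDerivAt_sub (by linarith)).deriv]; exact hF.norm_deriv_sub_one_le hw)
    hF.tendsto_sub hz

theorem deriv_ne_zero (hF : SHat α 0 F) {z : ℂ} (hz : 16 * decayConst + 1 ≤ z.im) :
    deriv F z ≠ 0 := fun h => by
  have hK := decayConst_pos
  have := (hF.norm_deriv_sub_one_le (z := z) (by linarith)).trans
    (mul_exp_neg_two_pi_mul_le hK.le (by linarith))
  rw [h, zero_sub, norm_neg, norm_one] at this
  norm_num at this

theorem norm_inv_deriv_sub_one_le (hF : SHat α 0 F) {z : ℂ} (hz : 16 * decayConst + 1 ≤ z.im) :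
    ‖(deriv F z)⁻¹ - 1‖ ≤ 2 * decayConst * Real.exp (-2 * π * z.im) := by
  have hK := decayConst_pos
  have hd := hF.norm_deriv_sub_one_le (z := z) (by linarith)
  have hsmall := mul_exp_neg_two_pi_mul_le hK.le (t := z.im) (by linarith)
  exact (norm_inv_sub_one_le (by linarith)).trans (by linarith)

theorem exists_rightInverse (hF : SHat α 0 F) : ∃ G : ℂ → ℂ, ∀ w : ℂ,
    16 * decayConst + 3 / 2 ≤ w.im → w.im - 1 / 2 < (G w).im ∧ F (G w) = w := by
  have hK := decayConst_pos.le
  have hpre : ∀ w : ℂ, 16 * decayConst + 3 / 2 ≤ w.im → ∃ z ∈ ball (w - α) (1 / 2), F z = w :=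
    fun w hw => exists_mem_ball_eq_of_norm_sub_add_le (T := 16 * decayConst + 1)
      (hF.1.mono fun z (hz : _ ≤ z.im) => show 0 < z.im by linarith)
      (fun z hz => (hF.norm_sub_le (by linarith)).trans <| by
        simpa [mul_assoc] using mul_exp_neg_two_pi_mul_le (K := 2 * decayConst) (by positivity)
          (t := z.im) (by linarith))
      (by linarith)
  choose! G hGball hG using hpre
  refine ⟨G, fun w hw => ⟨?_, hG w hw⟩⟩
  linarith [im_le_im_add_norm_sub (G w) (w - α), mem_ball_iff_norm.1 (hGball w hw), sub_im w α,
    ofReal_im α]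

theorem hasDerivAt_of_eventually_rightInverse (hF : SHat α 0 F) {G : ℂ → ℂ} {w : ℂ}
    (hG : ∀ᶠ x in 𝓝 w, 0 < (G x).im ∧ F (G x) = x) (hd : deriv F (G w) ≠ 0) :
    HasDerivAt G (deriv F (G w))⁻¹ w := by
  have hopen : IsOpen {z : ℂ | 0 < z.im} := isOpen_lt continuous_const continuous_im
  exact HasStrictDerivAt.hasDerivAt_of_injOn
    ((hF.1.analyticOnNhd hopen _ hG.self_of_nhds.1).hasStrictDerivAt) hd
    (hopen.mem_nhds hG.self_of_nhds.1) hF.2.1 hG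

theorem exists_inverse (hF : SHat α 0 F) : ∃ G : ℂ → ℂ, ∀ w : ℂ, 16 * decayConst + 2 ≤ w.im →
    0 < (G w).im ∧ F (G w) = w ∧ HasDerivAt G (deriv F (G w))⁻¹ w ∧
    ‖G w - (w - α)‖ ≤ 2 * decayConst * Real.exp π * Real.exp (-2 * π * w.im) ∧
    ‖(deriv F (G w))⁻¹ - 1‖ ≤ 2 * decayConst * Real.exp π * Real.exp (-2 * π * w.im) := by
  have hK := decayConst_pos
  obtain ⟨G, hG⟩ := hF.exists_rightInverse
  refine ⟨G, fun w hw => ?_⟩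
  obtain ⟨hGw, hFG⟩ := hG w (by linarith)
  have hGim : 16 * decayConst + 1 ≤ (G w).im := by linarith
  have hshift : 2 * decayConst * Real.exp (-2 * π * (G w).im) ≤
      2 * decayConst * Real.exp π * Real.exp (-2 * π * w.im) := by
    rw [mul_assoc _ (Real.exp π)]
    exact mul_le_mul_of_nonneg_left (exp_neg_two_pi_mul_le hGw.le) (by positivity)
  have hnear : ∀ᶠ x in 𝓝 w, 0 < (G x).im ∧ F (G x) = x :=
    eventually_of_mem ((isOpen_lt continuous_const continuous_im).mem_nhds
      (show 16 * decayConst + 3 / 2 < w.im by linarith)) fun x (hx : _ < x.im) =>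
        ⟨by linarith [(hG x hx.le).1], (hG x hx.le).2⟩
  have hsub : G w - (w - α) = -(F (G w) - (G w + α)) := by rw [hFG]; ring
  refine ⟨by linarith, hFG, hF.hasDerivAt_of_eventually_rightInverse hnear (hF.deriv_ne_zero hGim),
    ?_, (hF.norm_inv_deriv_sub_one_le hGim).trans hshift⟩
  rw [hsub, norm_neg]
  exact (hF.norm_sub_le (by linarith)).trans hshift

end SHat

/-- There is a universal constant `C > 0` such that for any `F ∈ Ŝ_{α,0}`, the half-plane
`H_C` is contained in `F(H_0)`, the inverse `F⁻¹` is univalent on `H_C`, and it satisfies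
`|F⁻¹(z) - (z - α)| ≤ C e^{-2π Im z}` and `|(F⁻¹)'(z) - 1| ≤ C e^{-2π Im z}` for
`Im z ≥ C`. -/
theorem shat_inverse_estimates :
    ∃ C : ℝ, 0 < C ∧
      ∀ (α : ℝ) (F : ℂ → ℂ), SHat α 0 F →
        {z : ℂ | C < z.im} ⊆ F '' {z : ℂ | 0 < z.im} ∧
        ∃ Finv : ℂ → ℂ,
          (∀ z : ℂ, C ≤ z.im → 0 < (Finv z).im ∧ F (Finv z) = z) ∧
          Set.InjOn Finv {z : ℂ | C < z.im} ∧
          (∀ z : ℂ, C ≤ z.im → DifferentiableAt ℂ Finv z) ∧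
          (∀ z : ℂ, C ≤ z.im →
            ‖Finv z - (z - (α : ℂ))‖ ≤ C * Real.exp (-2 * Real.pi * z.im) ∧
            ‖deriv Finv z - 1‖ ≤ C * Real.exp (-2 * Real.pi * z.im)) := by
  set K := SHat.decayConst
  set C := 2 * K * Real.exp π + 16 * K + 2
  have hK : 0 < K := SHat.decayConst_pos
  have hT : ∀ z : ℂ, C ≤ z.im → 16 * K + 2 ≤ z.im := fun z hz => by
    linarith [mul_pos hK (Real.exp_pos π)]
  have hKC : ∀ z : ℂ, 2 * K * Real.exp π * Real.exp (-2 * π * z.im) ≤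
      C * Real.exp (-2 * π * z.im) := fun z =>
    mul_le_mul_of_nonneg_right (by linarith) (Real.exp_pos _).le
  refine ⟨C, by positivity, fun α F hF => ?_⟩
  obtain ⟨G, hG⟩ := hF.exists_inverse
  refine ⟨fun w (hw : C < w.im) => ⟨G w, (hG w (hT w hw.le)).1, (hG w (hT w hw.le)).2.1⟩, G,
    fun z hz => ⟨(hG z (hT z hz)).1, (hG z (hT z hz)).2.1⟩,
    fun x (hx : C < x.im) y (hy : C < y.im) hxy => ?_, fun z hz => ?_, fun z hz => ?_⟩
  · rw [← (hG x (hT x hx.le)).2.1, ← (hG y (hT y hy.le)).2.1, hxy]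
  · exact (hG z (hT z hz)).2.2.1.differentiableAt
  · obtain ⟨-, -, hderiv, hinv, hinv'⟩ := hG z (hT z hz)
    rw [hderiv.deriv]
    exact ⟨hinv.trans (hKC z), hinv'.trans (hKC z)⟩
end

section
/- Let α > 0, c ∈ ℂ, β̃ ∈ ℂ, and y₀ ≤ y₁, ỹ ∈ ℝ. Suppose: (i) K is univalent on S(2, y₀) and |K(z) − (z/α + c)| ≤ 2/α for all z ∈ S(2, y₀); (ii) sup{ |K′(z) − 1/α| : z ∈ S(2, y₀), Im z ≥ Y } → 0 as Y → +∞; (iii) G is holomorphic on H_{ỹ} and G(w) − w → β̃ as Im w → +∞, uniformly in Re w; (iv) K(z) ∈ H_{ỹ} for all z ∈ S(1, y₁); (v) G* is holomorphic on S(1, y₁), G*(z) ∈ S(2, y₀) for all z ∈ S(1, y₁), and K(G*(z)) = G(K(z)) for all z ∈ S(1, y₁). Then G*(z) − z → α·β̃ as Im z → +∞ along z ∈ S(1, y₁); that is, the conjugated map G* has rotation number α·β̃. -/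
/-!
Write `w = G* z` and `f = K - α⁻¹ • id`. The conjugacy `K w = G (K z)` gives
`w - z = α (G (K z) - K z) - α (f w - f z)`. Since `K` is within a bounded distance of an affine
map, `Im K z → ∞`, so the first term tends to `α β̃`. As `f` is bounded on the strip, `w - z` stays
bounded; hence the segment `[z, w]` escapes to `Im = +∞` inside the wider strip, where
`f' = K' - α⁻¹ → 0`, and the mean value inequality makes `f w - f z` negligible.
-/
open Set Filter Topology Asymptotics Complex

local notation "I∞" => comap Complex.im atTop

def halfStrip (a y : ℝ) : Set ℂ := {z | |z.re| ≤ a ∧ y ≤ z.im}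

theorem convex_halfStrip (a y : ℝ) : Convex ℝ (halfStrip a y) := by
  have hS : halfStrip a y = reLm ⁻¹' Icc (-a) a ∩ imLm ⁻¹' Ici y := by
    ext; simp [halfStrip, abs_le]
  rw [hS]
  exact ((convex_Icc _ _).linear_preimage _).inter ((convex_Ici _).linear_preimage _)

theorem halfStrip_subset_halfStrip {a b y y' : ℝ} (hab : a ≤ b) (hy : y' ≤ y) :
    halfStrip a y ⊆ halfStrip b y' :=
  fun _ ⟨hre, him⟩ => ⟨hre.trans hab, hy.trans him⟩

theorem mem_interior_halfStrip {a y : ℝ} {z : ℂ} (hre : |z.re| < a) (him : y < z.im) :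
    z ∈ interior (halfStrip a y) := by
  have hopen : IsOpen {z : ℂ | |z.re| < a ∧ y < z.im} :=
    (isOpen_lt (continuous_abs.comp continuous_re) continuous_const).inter
      (isOpen_lt continuous_const continuous_im)
  have hsub : {z : ℂ | |z.re| < a ∧ y < z.im} ⊆ halfStrip a y := fun _ h => ⟨h.1.le, h.2.le⟩
  exact interior_maximal hsub hopen ⟨hre, him⟩

theorem eventually_comap_im_atTop_inf_principal {p : ℂ → Prop} {s : Set ℂ} :
    (∀ᶠ z in I∞ ⊓ 𝓟 s, p z) ↔ ∃ Y, ∀ z ∈ s, Y ≤ z.im → p z := by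
  simp only [eventually_inf_principal, (atTop_basis.comap im).eventually_iff, mem_preimage,
    mem_Ici, true_and]
  exact exists_congr fun Y => forall_congr' fun z => forall_comm

theorem tendsto_comap_im_atTop_inf_principal_nhds {E : Type*} [SeminormedAddCommGroup E]
    {f : ℂ → E} {s : Set ℂ} {a : E} :
    Tendsto f (I∞ ⊓ 𝓟 s) (𝓝 a) ↔
      ∀ ε : ℝ, 0 < ε → ∃ Y : ℝ, ∀ z ∈ s, Y ≤ z.im → ‖f z - a‖ ≤ ε := by
  simp only [Metric.nhds_basis_closedBall.tendsto_right_iff, Metric.mem_closedBall, dist_eq_norm,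
    eventually_comap_im_atTop_inf_principal]

theorem Convex.norm_image_sub_le_of_norm_deriv_le_interior {f f' : ℂ → ℂ} {s : Set ℂ} {C : ℝ}
    (hs : Convex ℝ s) (hf : ContinuousOn f s)
    (hf' : ∀ x ∈ interior s, HasDerivAt f (f' x) x) (bound : ∀ x ∈ interior s, ‖f' x‖ ≤ C)
    {z w : ℂ} (hz : z ∈ interior s) (hw : w ∈ s) : ‖f w - f z‖ ≤ C * ‖w - z‖ := by
  set p : ℝ → ℂ := fun t => z + t * (w - z)
  have hp_mem : ∀ t ∈ Ico (0 : ℝ) 1, p t ∈ interior s := by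
    intro t ht
    convert hs.add_smul_sub_mem_interior hw hz (t := 1 - t)
      ⟨by linarith [ht.2], by linarith [ht.1]⟩ using 1
    simp only [p, Complex.real_smul]; push_cast; ring
  have hp_deriv : ∀ t ∈ Ico (0 : ℝ) 1, HasDerivAt (f ∘ p) (f' (p t) * (w - z)) t := by
    intro t ht
    have hline : HasDerivAt (fun u : ℂ => z + u * (w - z)) (w - z) t := by
      simpa using ((hasDerivAt_id (t : ℂ)).mul_const (w - z)).const_add z
    exact ((hf' _ (hp_mem t ht)).comp (t : ℂ) hline).comp_ofReal
  have hp_maps : MapsTo p (Icc 0 1) s := fun t ht => by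
    simpa [p, Complex.real_smul] using hs.segment_subset (interior_subset hz) hw
      ((segment_eq_image' ℝ z w).symm ▸ mem_image_of_mem _ ht)
  have hseg := norm_image_sub_le_of_norm_deriv_right_le_segment (C := C * ‖w - z‖)
    (hf.comp (by fun_prop) hp_maps) (fun t ht => (hp_deriv t ht).hasDerivWithinAt)
    (fun t ht => ?_) 1 ⟨zero_le_one, le_rfl⟩
  · simpa [p] using hseg
  · rw [norm_mul]
    exact mul_le_mul_of_nonneg_right (bound _ (hp_mem t ht)) (norm_nonneg _)

theorem tendsto_comap_im_atTop_of_isBigO_sub {α : Type*} {l : Filter α} {u v : α → ℂ}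
    (hv : Tendsto v l I∞) (huv : (fun x => u x - v x) =O[l] (fun _ => (1 : ℝ))) :
    Tendsto u l I∞ := by
  obtain ⟨C, hC⟩ := huv.bound
  rw [tendsto_comap_iff] at hv ⊢
  refine tendsto_atTop_mono' l (hC.mono fun x hx => ?_) (tendsto_atTop_add_const_right _ (-C) hv)
  have := (abs_le.1 ((abs_im_le_norm _).trans hx)).1
  simp only [norm_one, mul_one, sub_im] at this
  simp only [Function.comp_apply]
  linarith

theorem tendsto_comap_im_atTop_of_norm_sub_affine_le {α r : ℝ} {c : ℂ} {K : ℂ → ℂ} {s : Set ℂ}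
    (hα : 0 < α) (hK : ∀ z ∈ s, ‖K z - (z / α + c)‖ ≤ r) : Tendsto K (I∞ ⊓ 𝓟 s) I∞ := by
  have haff : Tendsto (fun z : ℂ => z / α + c) (I∞ ⊓ 𝓟 s) I∞ := by
    refine tendsto_comap_iff.2 ?_
    have : Tendsto (fun z : ℂ => z.im / α + c.im) (I∞ ⊓ 𝓟 s) atTop :=
      tendsto_atTop_add_const_right _ _ ((tendsto_comap.mono_left inf_le_left).atTop_div_const hα)
    simpa [Function.comp_def, Complex.div_ofReal_im] using this
  refine tendsto_comap_im_atTop_of_isBigO_sub haff (IsBigO.of_bound r ?_)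
  exact eventually_inf_principal.2 (.of_forall fun z hz => by simpa using hK z hz)

theorem isLittleO_image_sub_of_tendsto_deriv {K : ℂ → ℂ} {L : ℂ} {a b y₀ y₁ : ℝ} (hab : a < b)
    (hK : DifferentiableOn ℂ K (halfStrip b y₀))
    (hK' : Tendsto (deriv K) (I∞ ⊓ 𝓟 (halfStrip b y₀)) (𝓝 L)) {u : ℂ → ℂ}
    (hu : ∀ z ∈ halfStrip a y₁, u z ∈ halfStrip b y₀)
    (hu_top : Tendsto u (I∞ ⊓ 𝓟 (halfStrip a y₁)) I∞) :
    (fun z => (K (u z) - L * u z) - (K z - L * z)) =o[I∞ ⊓ 𝓟 (halfStrip a y₁)]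
      fun z => u z - z := by
  refine IsLittleO.of_bound fun δ hδ => ?_
  obtain ⟨Y, hY⟩ := tendsto_comap_im_atTop_inf_principal_nhds.1 hK' δ hδ
  set T := halfStrip b (max y₀ Y)
  have hTS : T ⊆ halfStrip b y₀ := halfStrip_subset_halfStrip le_rfl (le_max_left _ _)
  have hz : ∀ᶠ z in I∞ ⊓ 𝓟 (halfStrip a y₁), z ∈ interior T :=
    eventually_comap_im_atTop_inf_principal.2 ⟨max y₀ Y + 1, fun z hz hzY =>
      mem_interior_halfStrip (hz.1.trans_lt hab) (by linarith)⟩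
  have hw : ∀ᶠ z in I∞ ⊓ 𝓟 (halfStrip a y₁), u z ∈ T := by
    filter_upwards [hu_top.eventually (tendsto_comap.eventually (eventually_ge_atTop (max y₀ Y))),
      mem_inf_of_right (mem_principal_self _)] with z hzY hz
    exact ⟨(hu z hz).1, hzY⟩
  filter_upwards [hz, hw] with z hz hw
  refine (convex_halfStrip b _).norm_image_sub_le_of_norm_deriv_le_interior
    (f := fun x => K x - L * x) (f' := fun x => deriv K x - L) ?_ (fun x hx => ?_)
    (fun x hx => ?_) hz hw
  · exact (hK.continuousOn.mono hTS).sub (by fun_prop)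
  · have hKx : DifferentiableAt ℂ K x :=
      hK.differentiableAt (mem_of_superset (isOpen_interior.mem_nhds hx)
        (interior_subset.trans hTS))
    simpa using hKx.hasDerivAt.fun_sub ((hasDerivAt_id x).const_mul L)
  · exact hY x (hTS (interior_subset hx)) ((le_max_right _ _).trans (interior_subset hx).2)

theorem conjugate_rotation_number_general
    (α : ℝ) (c βt : ℂ) (y₀ y₁ : ℝ) (K G Gstar : ℂ → ℂ)
    (hα : 0 < α) (hy : y₀ ≤ y₁)
    -- (i) K is univalent on S(2,y₀) and close to the affine map z ↦ z/α + c
    (hKdiff : DifferentiableOn ℂ K {z : ℂ | |z.re| ≤ 2 ∧ y₀ ≤ z.im})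
    (hKaffine : ∀ z ∈ {z : ℂ | |z.re| ≤ 2 ∧ y₀ ≤ z.im},
      ‖K z - (z / (α : ℂ) + c)‖ ≤ 2 / α)
    -- (ii) K' → 1/α at infinity on the strip
    (hKderiv : ∀ ε : ℝ, 0 < ε → ∃ Y : ℝ, ∀ z ∈ {z : ℂ | |z.re| ≤ 2 ∧ y₀ ≤ z.im},
      Y ≤ z.im → ‖deriv K z - ((α : ℂ))⁻¹‖ ≤ ε)
    -- (iii) G is holomorphic on H_ỹ and G(w) - w → β̃ uniformly as Im w → +∞
    (hGrot : ∀ ε : ℝ, 0 < ε → ∃ Y : ℝ, ∀ w : ℂ, Y ≤ w.im → ‖G w - w - βt‖ ≤ ε)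
    -- (v) G* is the conjugate of G by K on S(1,y₁)
    (hGstarmaps : ∀ z ∈ {z : ℂ | |z.re| ≤ 1 ∧ y₁ ≤ z.im},
      Gstar z ∈ {z : ℂ | |z.re| ≤ 2 ∧ y₀ ≤ z.im})
    (hconj : ∀ z ∈ {z : ℂ | |z.re| ≤ 1 ∧ y₁ ≤ z.im}, K (Gstar z) = G (K z)) :
    ∀ ε : ℝ, 0 < ε → ∃ Y : ℝ, ∀ z ∈ {z : ℂ | |z.re| ≤ 1 ∧ y₁ ≤ z.im},
      Y ≤ z.im → ‖Gstar z - z - (α : ℂ) * βt‖ ≤ ε := by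
  set l := I∞ ⊓ 𝓟 (halfStrip 1 y₁)
  have hS : halfStrip 1 y₁ ⊆ halfStrip 2 y₀ := halfStrip_subset_halfStrip one_le_two hy
  set D : ℂ → ℂ := fun z => (K (Gstar z) - (α : ℂ)⁻¹ * Gstar z) - (K z - (α : ℂ)⁻¹ * z)
  have hD_bdd : D =O[l] fun _ => (1 : ℝ) := by
    refine .of_bound (2 / α + 2 / α) (eventually_inf_principal.2 (.of_forall fun z hz => ?_))
    have hD : D z = (K (Gstar z) - (Gstar z / α + c)) - (K z - (z / α + c)) := by
      simp only [D]; ring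
    rw [hD, norm_one, mul_one]
    exact (norm_sub_le _ _).trans
      (add_le_add (hKaffine _ (hGstarmaps z hz)) (hKaffine z (hS hz)))
  have hK_top : Tendsto K l I∞ :=
    (tendsto_comap_im_atTop_of_norm_sub_affine_le hα hKaffine).mono_left
      (inf_le_inf_left _ (principal_mono.2 hS))
  have hG : Tendsto (fun w => G w - w) I∞ (𝓝 βt) := by
    simpa using (tendsto_comap_im_atTop_inf_principal_nhds (s := univ)).2 (by simpa using hGrot)
  have hGK : Tendsto (fun z => G (K z) - K z) l (𝓝 βt) := hG.comp hK_top
  have hconj' : ∀ᶠ z in l, α * (G (K z) - K z) - α * D z = Gstar z - z := by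
    refine eventually_inf_principal.2 (.of_forall fun z hz => ?_)
    have hα0 : (α : ℂ) ≠ 0 := by exact_mod_cast hα.ne'
    simp only [D, hconj z hz]
    field_simp
    ring
  have hstep : (fun z => Gstar z - z) =O[l] fun _ => (1 : ℝ) :=
    (((hGK.isBigO_one ℝ).const_mul_left (α : ℂ)).sub (hD_bdd.const_mul_left (α : ℂ))).congr'
      hconj' (.of_forall fun _ => rfl)
  have hGstar_top : Tendsto Gstar l I∞ :=
    tendsto_comap_im_atTop_of_isBigO_sub (tendsto_id'.2 inf_le_left) hstep
  have hK' : Tendsto (deriv K) (I∞ ⊓ 𝓟 (halfStrip 2 y₀)) (𝓝 (α : ℂ)⁻¹) :=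
    tendsto_comap_im_atTop_inf_principal_nhds.2 hKderiv
  have hD : Tendsto D l (𝓝 0) := (isLittleO_one_iff ℝ).1 <|
    (isLittleO_image_sub_of_tendsto_deriv one_lt_two hKdiff hK' hGstarmaps hGstar_top).trans_isBigO
      hstep
  refine (tendsto_comap_im_atTop_inf_principal_nhds (s := halfStrip 1 y₁)).1 ?_
  simpa only [mul_zero, sub_zero] using
    ((hGK.const_mul (α : ℂ)).sub (hD.const_mul (α : ℂ))).congr' hconj'

/-- If `K` is a univalent map on the half-strip `S(2,y₀)` close to the affine map
`z ↦ z/α + c` with `K' → 1/α` at infinity, `G` is holomorphic on `H_ỹ` with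
`G(w) - w → β̃` at infinity, and `G*` is a conjugate of `G` by `K` on `S(1,y₁)`, then
`G*(z) - z → α β̃` as `Im z → +∞` along `S(1,y₁)`: the conjugate has rotation number
`α β̃`. -/
theorem conjugate_rotation_number
    (α : ℝ) (c βt : ℂ) (y₀ y₁ yt : ℝ) (K G Gstar : ℂ → ℂ)
    (hα : 0 < α) (hy : y₀ ≤ y₁)
    -- (i) K is univalent on S(2,y₀) and close to the affine map z ↦ z/α + c
    (hKdiff : DifferentiableOn ℂ K {z : ℂ | |z.re| ≤ 2 ∧ y₀ ≤ z.im})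
    (hKinj : Set.InjOn K {z : ℂ | |z.re| ≤ 2 ∧ y₀ ≤ z.im})
    (hKaffine : ∀ z ∈ {z : ℂ | |z.re| ≤ 2 ∧ y₀ ≤ z.im},
      ‖K z - (z / (α : ℂ) + c)‖ ≤ 2 / α)
    -- (ii) K' → 1/α at infinity on the strip
    (hKderiv : ∀ ε : ℝ, 0 < ε → ∃ Y : ℝ, ∀ z ∈ {z : ℂ | |z.re| ≤ 2 ∧ y₀ ≤ z.im},
      Y ≤ z.im → ‖deriv K z - ((α : ℂ))⁻¹‖ ≤ ε)
    -- (iii) G is holomorphic on H_ỹ and G(w) - w → β̃ uniformly as Im w → +∞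
    (hGdiff : DifferentiableOn ℂ G {w : ℂ | yt < w.im})
    (hGrot : ∀ ε : ℝ, 0 < ε → ∃ Y : ℝ, ∀ w : ℂ, Y ≤ w.im → ‖G w - w - βt‖ ≤ ε)
    -- (iv) K maps S(1,y₁) into H_ỹ
    (hKmaps : ∀ z ∈ {z : ℂ | |z.re| ≤ 1 ∧ y₁ ≤ z.im}, yt < (K z).im)
    -- (v) G* is the conjugate of G by K on S(1,y₁)
    (hGstardiff : DifferentiableOn ℂ Gstar {z : ℂ | |z.re| ≤ 1 ∧ y₁ ≤ z.im})
    (hGstarmaps : ∀ z ∈ {z : ℂ | |z.re| ≤ 1 ∧ y₁ ≤ z.im},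
      Gstar z ∈ {z : ℂ | |z.re| ≤ 2 ∧ y₀ ≤ z.im})
    (hconj : ∀ z ∈ {z : ℂ | |z.re| ≤ 1 ∧ y₁ ≤ z.im}, K (Gstar z) = G (K z)) :
    ∀ ε : ℝ, 0 < ε → ∃ Y : ℝ, ∀ z ∈ {z : ℂ | |z.re| ≤ 1 ∧ y₁ ≤ z.im},
      Y ≤ z.im → ‖Gstar z - z - (α : ℂ) * βt‖ ≤ ε :=
  conjugate_rotation_number_general α c βt y₀ y₁ K G Gstar hα hy hKdiff hKaffine hKderiv hGrot
    hGstarmaps hconj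
end

section
/- Let r > 0, let t₀ be an irrational real number, and let g be holomorphic on 𝔻_r with g(0) = 0 and g′(0) = e^{2πit₀}. Let t ∈ ℝ and let f₁, f₂ be holomorphic on 𝔻_r with f₁(0) = f₂(0) = 0 and f₁′(0) = f₂′(0) = e^{2πit}, such that each f_i commutes with g as a germ at 0 (f_i(g(z)) = g(f_i(z)) for all z in some neighborhood of 0). Then f₁ = f₂ on 𝔻_r. -/
/-!
Expand everything in power series at `0`. If `p` commutes with `G` under composition and
`λ = G'(0)`, comparing the `N`-th coefficients of `p ∘ G` and `G ∘ p` gives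
`λ^N p_N + (terms in p_1, …, p_{N-1}) = λ p_N + (terms in p_1, …, p_{N-1})`.
Since `λ = e^{2πit₀}` with `t₀` irrational is not a root of unity, `λ^N ≠ λ` for `N ≥ 2`, so each
`p_N` is determined by the lower coefficients, hence by `p_0 = 0` and `p_1 = e^{2πit}`.
Thus `f₁` and `f₂` have the same germ at `0`, and agree on the disc by the identity theorem.
-/

open Filter Topology

namespace FormalMultilinearSeries

variable {𝕜 : Type*} [NontriviallyNormedField 𝕜]

theorem ext_coeff {E : Type*} [NormedAddCommGroup E] [NormedSpace 𝕜 E]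
    {p q : FormalMultilinearSeries 𝕜 𝕜 E} (h : ∀ n, p.coeff n = q.coeff n) :
    p = q := by
  funext n
  rw [← p.mkPiRing_coeff_eq n, ← q.mkPiRing_coeff_eq n, h n]

theorem coeff_comp (q p : FormalMultilinearSeries 𝕜 𝕜 𝕜) (n : ℕ) :
    (q.comp p).coeff n =
      ∑ c : Composition n, q.coeff c.length * ∏ i, p.coeff (c.blocksFun i) := by
  change (∑ c : Composition n, q.compAlongComposition p c) 1 = _
  rw [sum_apply]
  refine Finset.sum_congr rfl fun c _ => ?_
  have happly : p.applyComposition c 1 = fun i => p.coeff (c.blocksFun i) • (1 : 𝕜) := by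
    funext i
    simp only [applyComposition, smul_eq_mul, mul_one]
    rfl
  rw [compAlongComposition_apply, happly, ContinuousMultilinearMap.map_smul_univ, smul_eq_mul,
    mul_comm]
  rfl

variable {G p q : FormalMultilinearSeries 𝕜 𝕜 𝕜} {N : ℕ}

/-- Only the composition `1 + ⋯ + 1` involves the `N`-th coefficient of the outer series. -/
theorem coeff_comp_sub_coeff_comp_left (h : ∀ k < N, p.coeff k = q.coeff k) :
    (p.comp G).coeff N - (q.comp G).coeff N = (p.coeff N - q.coeff N) * G.coeff 1 ^ N := by
  rw [coeff_comp, coeff_comp, ← Finset.sum_sub_distrib,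
    Finset.sum_eq_single_of_mem (Composition.ones N) (Finset.mem_univ _)]
  · simp only [Composition.ones_length, Composition.ones_blocksFun, Finset.prod_const,
      Finset.card_univ, Fintype.card_fin]
    ring
  · intro c _ hc
    have hlen : c.length < N :=
      c.length_le.lt_of_ne fun h => hc (Composition.eq_ones_iff_length.2 h)
    rw [h _ hlen, sub_self]

/-- Only the composition `N = N` involves the `N`-th coefficient of the inner series. -/
theorem coeff_comp_sub_coeff_comp_right (hN : 0 < N) (h : ∀ k < N, p.coeff k = q.coeff k) :
    (G.comp p).coeff N - (G.comp q).coeff N = G.coeff 1 * (p.coeff N - q.coeff N) := by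
  rw [coeff_comp, coeff_comp, ← Finset.sum_sub_distrib,
    Finset.sum_eq_single_of_mem (Composition.single N hN) (Finset.mem_univ _)]
  · have hsingle (f : ℕ → 𝕜) : ∏ i, f ((Composition.single N hN).blocksFun i) = f N := by
      rw [Fintype.prod_eq_single ⟨0, by simp⟩ fun i hi =>
        absurd (Fin.ext (by have := i.2; simp at this; omega)) hi]
      exact congrArg f (Composition.single_blocksFun hN _)
    rw [hsingle, hsingle, Composition.single_length, mul_sub]
  · intro c _ hc
    have hblocks : ∀ i, c.blocksFun i < N := (Composition.ne_single_iff hN).1 hc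
    rw [Finset.prod_congr rfl fun i _ => h _ (hblocks i), sub_self]

theorem eq_of_comp_comm (hG : ∀ n, 2 ≤ n → G.coeff 1 ^ n ≠ G.coeff 1)
    (hp : p.comp G = G.comp p) (hq : q.comp G = G.comp q)
    (h₀ : p.coeff 0 = q.coeff 0) (h₁ : p.coeff 1 = q.coeff 1) : p = q := by
  refine ext_coeff fun n => ?_
  induction n using Nat.strong_induction_on with
  | _ N ih =>
    match N, ih with
    | 0, _ => exact h₀
    | 1, _ => exact h₁
    | N + 2, ih =>
      have hcomm := coeff_comp_sub_coeff_comp_left (G := G) ih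
      rw [hp, hq, coeff_comp_sub_coeff_comp_right (by omega) ih] at hcomm
      have hzero :
          (p.coeff (N + 2) - q.coeff (N + 2)) * (G.coeff 1 ^ (N + 2) - G.coeff 1) = 0 := by
        linear_combination -hcomm
      rcases mul_eq_zero.1 hzero with h | h
      · exact sub_eq_zero.1 h
      · exact absurd (sub_eq_zero.1 h) (hG _ (by omega))

end FormalMultilinearSeries

theorem HasFPowerSeriesAt.comp_comm {𝕜 : Type*} [NontriviallyNormedField 𝕜] {f g : 𝕜 → 𝕜}
    {p q : FormalMultilinearSeries 𝕜 𝕜 𝕜} {x : 𝕜} (hf : HasFPowerSeriesAt f p x)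
    (hg : HasFPowerSeriesAt g q x) (hfx : f x = x) (hgx : g x = x)
    (hcomm : ∀ᶠ z in 𝓝 x, f (g z) = g (f z)) : p.comp q = q.comp p :=
  ((hgx ▸ hf).comp hg).eq_formalMultilinearSeries_of_eventually ((hfx ▸ hg).comp hf) hcomm

theorem HasFPowerSeriesAt.eventuallyEq {𝕜 E F : Type*} [NontriviallyNormedField 𝕜]
    [NormedAddCommGroup E] [NormedSpace 𝕜 E] [NormedAddCommGroup F] [NormedSpace 𝕜 F]
    {f g : E → F} {p : FormalMultilinearSeries 𝕜 E F} {x : E}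
    (hf : HasFPowerSeriesAt f p x) (hg : HasFPowerSeriesAt g p x) : f =ᶠ[𝓝 x] g := by
  have hsub := hf.sub hg
  rw [sub_self] at hsub
  exact hsub.eventually_eq_zero.mono fun _ => sub_eq_zero.1

theorem Complex.exp_two_pi_I_mul_pow_ne_self {t : ℝ} (ht : Irrational t) {n : ℕ} (hn : 2 ≤ n) :
    exp (2 * Real.pi * I * t) ^ n ≠ exp (2 * Real.pi * I * t) := by
  obtain ⟨m, rfl⟩ := Nat.exists_eq_add_of_le' hn
  rw [Ne, pow_succ, mul_eq_right₀ (exp_ne_zero _), ← exp_nat_mul, exp_eq_one_iff]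
  rintro ⟨k, hk⟩
  have h2pi : 2 * (Real.pi : ℂ) * I ≠ 0 := by simp [Real.pi_ne_zero]
  have hmul : ((m + 1 : ℕ) : ℂ) * t = k := mul_left_cancel₀ h2pi (by linear_combination hk)
  exact (ht.natCast_mul m.succ_ne_zero).ne_int k (mod_cast hmul)

/-- A germ commuting with a fixed germ `g` of irrational rotation number `t₀` is uniquely
determined by its rotation number: two holomorphic maps on `𝔻_r` fixing `0`, with the same
derivative `e^{2πit}` at `0`, each commuting with `g` as a germ at `0`, agree on `𝔻_r`. -/
theorem commuting_germ_unique
    (r : ℝ) (hr : 0 < r) (t₀ : ℝ) (ht₀ : Irrational t₀) (g : ℂ → ℂ)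
    (hg : DifferentiableOn ℂ g (Metric.ball 0 r)) (hg0 : g 0 = 0)
    (hgd : deriv g 0 = Complex.exp (2 * Real.pi * Complex.I * (t₀ : ℂ)))
    (t : ℝ) (f₁ f₂ : ℂ → ℂ)
    (hf₁ : DifferentiableOn ℂ f₁ (Metric.ball 0 r))
    (hf₂ : DifferentiableOn ℂ f₂ (Metric.ball 0 r))
    (hf₁0 : f₁ 0 = 0) (hf₂0 : f₂ 0 = 0)
    (hf₁d : deriv f₁ 0 = Complex.exp (2 * Real.pi * Complex.I * (t : ℂ)))
    (hf₂d : deriv f₂ 0 = Complex.exp (2 * Real.pi * Complex.I * (t : ℂ)))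
    (hc₁ : ∃ U ∈ nhds (0 : ℂ), ∀ z ∈ U, f₁ (g z) = g (f₁ z))
    (hc₂ : ∃ U ∈ nhds (0 : ℂ), ∀ z ∈ U, f₂ (g z) = g (f₂ z)) :
    Set.EqOn f₁ f₂ (Metric.ball 0 r) := by
  have h0 : (0 : ℂ) ∈ Metric.ball 0 r := Metric.mem_ball_self hr
  have hg' := hg.analyticOnNhd Metric.isOpen_ball
  have hf₁' := hf₁.analyticOnNhd Metric.isOpen_ball
  have hf₂' := hf₂.analyticOnNhd Metric.isOpen_ball
  obtain ⟨G, hG⟩ := hg' 0 h0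
  obtain ⟨p, hp⟩ := hf₁' 0 h0
  obtain ⟨q, hq⟩ := hf₂' 0 h0
  have hG₁ : G.coeff 1 = deriv g 0 := hG.deriv.symm
  have hp₁ : p.coeff 1 = deriv f₁ 0 := hp.deriv.symm
  have hq₁ : q.coeff 1 = deriv f₂ 0 := hq.deriv.symm
  have hpq : p = q := by
    refine FormalMultilinearSeries.eq_of_comp_comm ?_
      (hp.comp_comm hG hf₁0 hg0 (eventually_iff_exists_mem.2 hc₁))
      (hq.comp_comm hG hf₂0 hg0 (eventually_iff_exists_mem.2 hc₂)) ?_ ?_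
    · rw [hG₁, hgd]
      exact fun n => Complex.exp_two_pi_I_mul_pow_ne_self ht₀
    · change p 0 1 = q 0 1
      rw [hp.coeff_zero, hq.coeff_zero, hf₁0, hf₂0]
    · rw [hp₁, hq₁, hf₁d, hf₂d]
  exact hf₁'.eqOn_of_preconnected_of_eventuallyEq hf₂' (convex_ball 0 r).isPreconnected h0
    (hp.eventuallyEq (hpq ▸ hq))
end

section
/- Let α be an irrational real number, and let f and g be holomorphic maps defined on a neighborhood of 0 in ℂ with f(0) = g(0) = 0 and f′(0) = e^{2πiα}, which commute as germs at 0 (f(g(z)) = g(f(z)) for all z in some neighborhood of 0). Suppose h is holomorphic on a neighborhood of 0 with h(0) = 0, h′(0) = 1, and h(f(z)) = e^{2πiα}·h(z) for all z in some neighborhood of 0. Then h(g(z)) = g′(0)·h(z) for all z in some neighborhood of 0; that is, any map linearizing f simultaneously linearizes every germ commuting with f. -/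
/-!
Put `D = h ∘ g - g'(0) • h`. Commutation of `f` and `g` together with `h ∘ f = λ h` gives
`D ∘ f = λ D`, and `D'(0) = 0`. If `D` had a zero of finite order `n` at `0`, comparing the leading
terms of `D ∘ f` and `λ D` would give `λ ^ n = λ`; as `λ = e^{2πiα}` is not a root of unity this
forces `n = 1`, contradicting `D'(0) = 0`. Hence `D` vanishes near `0`.
-/

open Filter Topology

theorem eq_one_of_pow_eq_self {M : Type*} [MonoidWithZero M] [IsRightCancelMulZero M] {a : M}
    (ha0 : a ≠ 0) (ha : ¬IsOfFinOrder a) {n : ℕ} (hn : a ^ n = a) : n = 1 := by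
  obtain _ | m := n
  · exact absurd (isOfFinOrder_iff_pow_eq_one.2 ⟨1, one_pos, by simpa using hn.symm⟩) ha
  · have hm : a ^ m = 1 := mul_right_cancel₀ ha0 (by rw [← pow_succ, one_mul, hn])
    by_contra hm1
    exact ha (isOfFinOrder_iff_pow_eq_one.2 ⟨m, by omega, hm⟩)

section Multiplier

variable {𝕜 E : Type*} [NontriviallyNormedField 𝕜] [NormedAddCommGroup E] [NormedSpace 𝕜 E]
  {D : 𝕜 → E} {f : 𝕜 → 𝕜} {ρ μ : 𝕜}

theorem pow_analyticOrderAt_eq_of_comp_eq_smul {n : ℕ} (hD : AnalyticAt 𝕜 D 0)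
    (hn : analyticOrderAt D 0 = n) (hf0 : f 0 = 0) (hf : HasDerivAt f ρ 0)
    (hfe : ∀ᶠ z in 𝓝 0, D (f z) = μ • D z) : ρ ^ n = μ := by
  obtain ⟨u, hu, hu0, hDu⟩ := hD.analyticOrderAt_eq_natCast.1 hn
  simp only [sub_zero] at hDu
  have hfc : Tendsto f (𝓝 0) (𝓝 0) := by
    simpa [hf0] using hf.continuousAt.tendsto
  have hslope : Tendsto (fun z => f z / z) (𝓝[≠] 0) (𝓝 ρ) :=
    (hasDerivAt_iff_tendsto_slope.1 hf).congr fun z => by simp [slope_def_field, hf0]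
  have hu_lim : Tendsto u (𝓝[≠] 0) (𝓝 (u 0)) :=
    hu.continuousAt.tendsto.mono_left nhdsWithin_le_nhds
  -- divide `D (f z) = μ • D z` by `z ^ n`
  have hquot : (fun z => (f z / z) ^ n • u (f z)) =ᶠ[𝓝[≠] 0] fun z => μ • u z := by
    filter_upwards [nhdsWithin_le_nhds hDu, nhdsWithin_le_nhds (hfc.eventually hDu),
      nhdsWithin_le_nhds hfe, self_mem_nhdsWithin] with z hz hfz hfez (hz0 : z ≠ 0)
    rw [hz, hfz, smul_comm] at hfez
    rw [div_pow, div_eq_inv_mul, mul_smul, hfez, inv_smul_smul₀ (pow_ne_zero n hz0)]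
  have hlim : Tendsto (fun z => (f z / z) ^ n • u (f z)) (𝓝[≠] 0) (𝓝 (ρ ^ n • u 0)) :=
    (hslope.pow n).smul (hu.continuousAt.tendsto.comp (hfc.mono_left nhdsWithin_le_nhds))
  exact smul_left_injective 𝕜 hu0
    (tendsto_nhds_unique (hlim.congr' hquot) (hu_lim.const_smul μ))

theorem hasDerivAt_comp_sub_deriv_mul {g h : 𝕜 → 𝕜} (hg0 : g 0 = 0)
    (hg : DifferentiableAt 𝕜 g 0) (hh : DifferentiableAt 𝕜 h 0) :
    HasDerivAt (fun z => h (g z) - deriv g 0 * h z) 0 0 := by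
  have hhg : HasDerivAt h (deriv h 0) (g 0) := by rw [hg0]; exact hh.hasDerivAt
  have := (hhg.comp 0 hg.hasDerivAt).fun_sub (hh.hasDerivAt.const_mul (deriv g 0))
  rwa [mul_comm, sub_self] at this

variable [CharZero 𝕜] [CompleteSpace E]

theorem eventually_eq_zero_of_comp_eq_smul (hD : AnalyticAt 𝕜 D 0) (hD' : deriv D 0 = 0)
    (hf0 : f 0 = 0) (hf : HasDerivAt f ρ 0) (hρ0 : ρ ≠ 0) (hρ : ¬IsOfFinOrder ρ)
    (hfe : ∀ᶠ z in 𝓝 0, D (f z) = ρ • D z) : ∀ᶠ z in 𝓝 0, D z = 0 := by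
  rw [← analyticOrderAt_eq_top]
  by_contra htop
  obtain ⟨n, hn⟩ := ENat.ne_top_iff_exists.1 htop
  have hn1 : n = 1 :=
    eq_one_of_pow_eq_self hρ0 hρ (pow_analyticOrderAt_eq_of_comp_eq_smul hD hn.symm hf0 hf hfe)
  rw [hn1] at hn
  have := ((analyticOrderAt_eq_nat_iff_iteratedDeriv_eq_zero hD).1 hn.symm).2
  exact this (by rwa [iteratedDeriv_one])

end Multiplier

theorem not_isOfFinOrder_exp_two_pi_I_mul {α : ℝ} (hα : Irrational α) :
    ¬IsOfFinOrder (Complex.exp (2 * Real.pi * Complex.I * α)) := by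
  rw [isOfFinOrder_iff_pow_eq_one]
  rintro ⟨n, hn, hpow⟩
  rw [← Complex.exp_nat_mul, Complex.exp_eq_one_iff] at hpow
  obtain ⟨k, hk⟩ := hpow
  have h2pi : 2 * (Real.pi : ℂ) * Complex.I ≠ 0 := by simp [Real.pi_ne_zero]
  have hnk : ((n * α : ℝ) : ℂ) = (k : ℝ) := by
    push_cast
    exact mul_right_cancel₀ h2pi (by linear_combination hk)
  exact (hα.natCast_mul hn.ne').ne_int k (Complex.ofReal_injective hnk)

theorem linearizer_linearizes_commuting_germs_general
    (α : ℝ) (hα : Irrational α) (f g h : ℂ → ℂ)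
    (hg : ∃ U ∈ nhds (0 : ℂ), DifferentiableOn ℂ g U)
    (hh : ∃ U ∈ nhds (0 : ℂ), DifferentiableOn ℂ h U)
    (hf0 : f 0 = 0) (hg0 : g 0 = 0)
    (hfd : deriv f 0 = Complex.exp (2 * Real.pi * Complex.I * (α : ℂ)))
    (hcomm : ∃ U ∈ nhds (0 : ℂ), ∀ z ∈ U, f (g z) = g (f z))
    (hlin : ∃ U ∈ nhds (0 : ℂ), ∀ z ∈ U,
      h (f z) = Complex.exp (2 * Real.pi * Complex.I * (α : ℂ)) * h z) :
    ∃ U ∈ nhds (0 : ℂ), ∀ z ∈ U, h (g z) = deriv g 0 * h z := by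
  set ρ := Complex.exp (2 * Real.pi * Complex.I * (α : ℂ))
  obtain ⟨Ug, hUg, hg⟩ := hg
  obtain ⟨Uh, hUh, hh⟩ := hh
  have hga : AnalyticAt ℂ g 0 := hg.analyticAt hUg
  have hha : AnalyticAt ℂ h 0 := hh.analyticAt hUh
  have hf : HasDerivAt f ρ 0 :=
    hfd ▸ (differentiableAt_of_deriv_ne_zero (hfd ▸ Complex.exp_ne_zero _)).hasDerivAt
  have hgc : Tendsto g (𝓝 0) (𝓝 0) := by simpa [hg0] using hga.continuousAt.tendsto
  set D : ℂ → ℂ := fun z => h (g z) - deriv g 0 * h z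
  have hDa : AnalyticAt ℂ D 0 := ((hg0 ▸ hha).comp hga).sub (analyticAt_const.mul hha)
  have hDf : ∀ᶠ z in 𝓝 0, D (f z) = ρ • D z := by
    filter_upwards [eventually_iff_exists_mem.2 hcomm, eventually_iff_exists_mem.2 hlin,
      hgc.eventually (eventually_iff_exists_mem.2 hlin)] with z hfg hhf hhfg
    simp only [D, smul_eq_mul, ← hfg, hhfg, hhf]
    ring
  have hD0 : ∀ᶠ z in 𝓝 0, D z = 0 :=
    eventually_eq_zero_of_comp_eq_smul hDa
      (hasDerivAt_comp_sub_deriv_mul hg0 hga.differentiableAt hha.differentiableAt).deriv hf0 hf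
      (Complex.exp_ne_zero _) (not_isOfFinOrder_exp_two_pi_I_mul hα) hDf
  exact eventually_iff_exists_mem.1 (hD0.mono fun z hz => sub_eq_zero.1 hz)

/-- A map linearizing a germ `f` with irrational rotation number simultaneously
linearizes every germ commuting with `f`: if `h(f(z)) = e^{2πiα} h(z)` near `0` and
`f ∘ g = g ∘ f` near `0`, then `h(g(z)) = g'(0)·h(z)` near `0`. -/
theorem linearizer_linearizes_commuting_germs
    (α : ℝ) (hα : Irrational α) (f g h : ℂ → ℂ)
    (hf : ∃ U ∈ nhds (0 : ℂ), DifferentiableOn ℂ f U)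
    (hg : ∃ U ∈ nhds (0 : ℂ), DifferentiableOn ℂ g U)
    (hh : ∃ U ∈ nhds (0 : ℂ), DifferentiableOn ℂ h U)
    (hf0 : f 0 = 0) (hg0 : g 0 = 0) (hh0 : h 0 = 0)
    (hfd : deriv f 0 = Complex.exp (2 * Real.pi * Complex.I * (α : ℂ)))
    (hhd : deriv h 0 = 1)
    (hcomm : ∃ U ∈ nhds (0 : ℂ), ∀ z ∈ U, f (g z) = g (f z))
    (hlin : ∃ U ∈ nhds (0 : ℂ), ∀ z ∈ U,
      h (f z) = Complex.exp (2 * Real.pi * Complex.I * (α : ℂ)) * h z) :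
    ∃ U ∈ nhds (0 : ℂ), ∀ z ∈ U, h (g z) = deriv g 0 * h z :=
  linearizer_linearizes_commuting_germs_general α hα f g h hg hh hf0 hg0 hfd hcomm hlin
end

section
/- Let r > 0 and let (f_t)_{t ∈ ℝ} be a family of injective holomorphic maps f_t : 𝔻_r → ℂ with f_{t+1} = f_t, f_t(0) = 0, and f_t′(0) = e^{2πit} for all t, such that t ↦ f_t(z) is continuous for each fixed z ∈ 𝔻_r, and f_s(f_t(z)) = f_{s+t}(z) for all s, t ∈ ℝ and all z ∈ 𝔻_r with f_t(z) ∈ 𝔻_r. Define h(z) = ∫₀¹ e^{−2πit}·f_t(z) dt. Then h is holomorphic on 𝔻_r, h(0) = 0, h′(0) = 1, and h(f_t(z)) = e^{2πit}·h(z) for all t ∈ ℝ and all z ∈ 𝔻_r with f_t(z) ∈ 𝔻_r. -/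
/-!
The average `h` intertwines the flow with the rotations by the substitution `s ↦ s + t` in its
defining integral, so the real content is that `h` is holomorphic, i.e. that the maps `f t` are
bounded near each point uniformly in `t`. Near `0` this follows from Baire's theorem, the flow law
and periodicity. Schwarz's lemma then gives `‖f t w‖ ≤ K ‖w‖` near `0`; applied to `f (-t)`, with
`f 0 = id` (an idempotent map that is invertible near its fixed point `0`), it keeps `f t` away
from `0` outside a neighbourhood of `0`. There a Harnack inequality for `log ‖f t‖`, obtained from
the Borel–Carathéodory theorem, bounds `f t` by its value at one point, which is bounded in `t` by
continuity and periodicity.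
-/

open Complex Metric Set Filter MeasureTheory Function
open scoped Topology Real

theorem eqOn_id_of_idempotent {g : ℂ → ℂ} {U : Set ℂ} {c : ℂ} (hg : DifferentiableOn ℂ g U)
    (hU : IsOpen U) (hU' : IsPreconnected U) (hc : c ∈ U) (hgc : g c = c) (hg' : deriv g c ≠ 0)
    (hidem : ∀ z ∈ U, g z ∈ U → g (g z) = g z) : EqOn g id U := by
  have hgd : DifferentiableAt ℂ g c := hg.differentiableAt (hU.mem_nhds hc)
  have hstrict : HasStrictDerivAt g (deriv g c) c :=
    ((hg.analyticOnNhd hU) c hc).hasStrictDerivAt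
  have htendsto : Tendsto g (𝓝 c) (𝓝 c) := by simpa only [hgc] using hgd.continuousAt.tendsto
  have hinv := hstrict.eventually_left_inverse hg'
  have hnear : g =ᶠ[𝓝 c] id := by
    filter_upwards [hinv, htendsto.eventually hinv, hU.mem_nhds hc,
      htendsto.eventually (hU.mem_nhds hc)] with z hz hgz hzU hgzU
    calc g z = _ := hgz.symm
      _ = z := by rw [hidem z hzU hgzU, hz]
  exact (hg.analyticOnNhd hU).eqOn_of_preconnected_of_eventuallyEq analyticOnNhd_id hU' hc hnear

theorem exists_log_of_differentiableOn_ball {g : ℂ → ℂ} {c : ℂ} {R : ℝ}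
    (hg : DifferentiableOn ℂ g (ball c R)) (hne : ∀ z ∈ ball c R, g z ≠ 0) :
    ∃ L : ℂ → ℂ, DifferentiableOn ℂ L (ball c R) ∧ L c = log (g c) ∧
      ∀ z ∈ ball c R, exp (L z) = g z := by
  have hq : DifferentiableOn ℂ (fun z => deriv g z / g z) (ball c R) :=
    ((hg.analyticOnNhd isOpen_ball).deriv.differentiableOn).div hg hne
  obtain ⟨L, hLc, hL⟩ := hq.isExactOn_ball.with_val_at c (log (g c))
  refine ⟨L, fun z hz => (hL z hz).differentiableAt.differentiableWithinAt, hLc, fun z hz => ?_⟩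
  have hc : c ∈ ball c R := mem_ball_self (pos_of_mem_ball hz)
  have hconst : ∀ w ∈ ball c R, HasDerivAt (fun z => g z * exp (-L z)) 0 w := by
    intro w hw
    have hexp : HasDerivAt (fun z => exp (-L z)) (exp (-L w) * -(deriv g w / g w)) w :=
      (hL w hw).neg.cexp
    refine (((hg.differentiableAt (isOpen_ball.mem_nhds hw)).hasDerivAt).mul hexp).congr_deriv ?_
    field_simp [hne w hw]
    ring
  have h := isOpen_ball.is_const_of_deriv_eq_zero (convex_ball c R).isPreconnected
    (fun w hw => (hconst w hw).differentiableAt.differentiableWithinAt)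
    (fun w hw => (hconst w hw).deriv) hz hc
  rw [hLc, exp_neg, exp_neg, exp_log (hne c hc), mul_inv_cancel₀ (hne c hc),
    mul_inv_eq_one₀ (exp_ne_zero _)] at h
  exact h.symm

/-- A Harnack inequality for the positive harmonic function `log ‖g‖ - log ρ`. -/
theorem norm_le_of_le_norm_on_ball {g : ℂ → ℂ} {c z : ℂ} {R ρ : ℝ}
    (hg : DifferentiableOn ℂ g (ball c R)) (hρ : 0 < ρ) (hgρ : ∀ w ∈ ball c R, ρ ≤ ‖g w‖)
    (hz : z ∈ ball c (R / 2)) : ‖g z‖ ≤ Real.exp (2 + 3 * π) * ‖g c‖ ^ 3 / ρ ^ 2 := by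
  have hR : 0 < R := by linarith [pos_of_mem_ball hz]
  have hc : c ∈ ball c R := mem_ball_self hR
  have hgpos : ∀ w ∈ ball c R, 0 < ‖g w‖ := fun w hw => hρ.trans_le (hgρ w hw)
  obtain ⟨L, hLd, hLc, hLexp⟩ :=
    exists_log_of_differentiableOn_ball hg fun w hw => norm_pos_iff.1 (hgpos w hw)
  have hLre : ∀ w ∈ ball c R, (L w).re = Real.log ‖g w‖ := fun w hw => by
    rw [← hLexp w hw, norm_exp, Real.log_exp]
  have hshift : ∀ w ∈ ball (0 : ℂ) R, c + w ∈ ball c R := fun w hw => by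
    simpa [mem_ball, dist_eq_norm] using hw
  -- Borel–Carathéodory applies to `φ`, whose real part is `log ρ - log ‖g (c + w)‖ ≤ 0`.
  set φ : ℂ → ℂ := fun w => Real.log ρ - L (c + w) with hφ
  have hφd : DifferentiableOn ℂ φ (ball 0 R) :=
    (differentiableOn_const _).sub (hLd.comp (by fun_prop) hshift)
  have hφre : MapsTo φ (ball 0 R) {w | w.re ≤ 1} := fun w hw => by
    have := Real.log_le_log hρ (hgρ _ (hshift w hw))
    show (φ w).re ≤ 1
    simp only [hφ, sub_re, ofReal_re, hLre _ (hshift w hw)]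
    linarith
  have hφ0 : ‖φ 0‖ ≤ Real.log ‖g c‖ - Real.log ρ + π := by
    have hle := Real.log_le_log hρ (hgρ c hc)
    calc ‖φ 0‖ ≤ |(φ 0).re| + |(φ 0).im| := norm_le_abs_re_add_abs_im _
      _ = (Real.log ‖g c‖ - Real.log ρ) + |arg (g c)| := by
          simp [hφ, hLc, log_re, log_im, abs_of_nonpos (sub_nonpos.2 hle)]
      _ ≤ _ := by gcongr; exact abs_arg_le_pi _
  have hzc : z - c ∈ ball (0 : ℂ) R := by
    rw [mem_ball_zero_iff, ← dist_eq_norm]; exact (mem_ball.1 hz).trans (by linarith)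
  have hzc' : ‖z - c‖ < R / 2 := by rw [← dist_eq_norm]; exact mem_ball.1 hz
  have hφz : ‖φ (z - c)‖ ≤ 2 + 3 * ‖φ 0‖ := by
    have hBC := borelCaratheodory one_pos hφd hφre hR hzc
    have h1 : 2 * 1 * ‖z - c‖ / (R - ‖z - c‖) ≤ 2 := by
      rw [div_le_iff₀ (by linarith)]; linarith
    have h2 : ‖φ 0‖ * (R + ‖z - c‖) / (R - ‖z - c‖) ≤ 3 * ‖φ 0‖ := by
      rw [div_le_iff₀ (by linarith)]; nlinarith [norm_nonneg (φ 0), norm_nonneg (z - c)]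
    linarith
  have hlog : Real.log ‖g z‖ ≤ (2 + 3 * π) + 3 * Real.log ‖g c‖ - 2 * Real.log ρ := by
    have hz' : z ∈ ball c R := by simpa using hshift _ hzc
    have : (φ (z - c)).re = Real.log ρ - Real.log ‖g z‖ := by
      simp [hφ, hLre z hz']
    linarith [neg_le_abs (φ (z - c)).re, abs_re_le_norm (φ (z - c))]
  have hgc := hgpos c hc
  rw [← Real.log_le_log_iff (hgpos z (by simpa using hshift _ hzc)) (by positivity),
    Real.log_div (by positivity) (by positivity), Real.log_mul (by positivity) (by positivity),
    Real.log_exp, Real.log_pow, Real.log_pow]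
  push_cast
  linarith

theorem aestronglyMeasurable_deriv_apply {α 𝕜 E : Type*} [MeasurableSpace α] {μ : Measure α}
    [NontriviallyNormedField 𝕜] [NormedAddCommGroup E] [NormedSpace 𝕜 E] {F : α → 𝕜 → E}
    {z : 𝕜} (hF : ∀ᶠ w in 𝓝 z, AEStronglyMeasurable (fun a => F a w) μ)
    (hd : ∀ᵐ a ∂μ, DifferentiableAt 𝕜 (F a) z) :
    AEStronglyMeasurable (fun a => deriv (F a) z) μ := by
  have hF' : ∀ᶠ w in 𝓝[≠] z, AEStronglyMeasurable (fun a => F a w) μ := nhdsWithin_le_nhds hF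
  obtain ⟨w, hw, hFw⟩ := exists_seq_forall_of_frequently hF'.frequently
  refine aestronglyMeasurable_of_tendsto_ae atTop
    (f := fun n a => slope (F a) z (w n)) (fun n => ?_) ?_
  · simp only [slope_def_module]
    exact ((hFw n).sub hF.self_of_nhds).const_smul _
  · filter_upwards [hd] with a ha
    exact (hasDerivAt_iff_tendsto_slope.1 ha.hasDerivAt).comp hw

theorem hasDerivAt_integral_of_locally_bounded {α E : Type*} [MeasurableSpace α]
    {μ : Measure α} [IsFiniteMeasure μ] [NormedAddCommGroup E] [NormedSpace ℂ E] [CompleteSpace E]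
    {F : α → ℂ → E} {U : Set ℂ} {z : ℂ} (hU : IsOpen U) (hz : z ∈ U)
    (hFd : ∀ a, DifferentiableOn ℂ (F a) U)
    (hFm : ∀ w ∈ U, AEStronglyMeasurable (fun a => F a w) μ)
    (hFb : ∃ C, ∀ᶠ w in 𝓝 z, ∀ a, ‖F a w‖ ≤ C) :
    HasDerivAt (fun w => ∫ a, F a w ∂μ) (∫ a, deriv (F a) z ∂μ) z := by
  obtain ⟨C, hC⟩ := hFb
  obtain ⟨ε, hε, hεC⟩ := Metric.eventually_nhds_iff_ball.1 (hC.and (hU.mem_nhds hz))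
  have hdiff : ∀ a, ∀ w ∈ ball z ε, HasDerivAt (F a) (deriv (F a) w) w := fun a w hw =>
    ((hFd a).differentiableAt (hU.mem_nhds (hεC w hw).2)).hasDerivAt
  have hderiv_le : ∀ a, ∀ w ∈ ball z (ε / 2), ‖deriv (F a) w‖ ≤ 2 * C / (ε / 2) := by
    intro a w hw
    have hsub : ball w (ε / 2) ⊆ ball z ε :=
      ball_subset_ball' (by linarith [mem_ball.1 hw])
    refine Complex.norm_deriv_le_div_of_mapsTo_ball
      ((hFd a).mono fun v hv => (hεC v (hsub hv)).2) (fun v hv => ?_) (half_pos hε)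
    rw [mem_closedBall, dist_eq_norm, two_mul]
    exact (norm_sub_le _ _).trans (add_le_add ((hεC v (hsub hv)).1 a)
      ((hεC w (hsub (mem_ball_self (half_pos hε)))).1 a))
  have hFm' : ∀ᶠ w in 𝓝 z, AEStronglyMeasurable (fun a => F a w) μ :=
    Filter.mem_of_superset (hU.mem_nhds hz) hFm
  exact (hasDerivAt_integral_of_dominated_loc_of_deriv_le (F := fun w a => F a w)
    (ball_mem_nhds z (half_pos hε)) hFm'
    (Integrable.of_bound hFm'.self_of_nhds C (ae_of_all _ fun a => (hεC z (mem_ball_self hε)).1 a))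
    (aestronglyMeasurable_deriv_apply hFm'
      (ae_of_all _ fun a => (hdiff a z (mem_ball_self hε)).differentiableAt))
    (ae_of_all _ hderiv_le) (integrable_const _)
    (ae_of_all _ fun a w hw => hdiff a w (ball_subset_ball (by linarith) hw))).2

theorem integral_exp_mul_comp_add {g : ℝ → ℂ} (hg : Periodic g 1) (t : ℝ) :
    (∫ s in (0 : ℝ)..1, exp (-(2 * π * I * s)) * g (s + t)) =
      exp (2 * π * I * t) * ∫ s in (0 : ℝ)..1, exp (-(2 * π * I * s)) * g s := by
  set φ : ℝ → ℂ := fun s => exp (-(2 * π * I * s)) * g s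
  have hφ : Periodic φ 1 := fun s => by
    have : -(2 * π * I * ((s + 1 : ℝ) : ℂ)) = -(2 * π * I * s) - 2 * π * I := by push_cast; ring
    simp only [φ, hg s, this, exp_sub, exp_two_pi_mul_I, div_one]
  calc (∫ s in (0 : ℝ)..1, exp (-(2 * π * I * s)) * g (s + t))
      = ∫ s in (0 : ℝ)..1, exp (2 * π * I * t) * φ (s + t) := by
        refine intervalIntegral.integral_congr fun s _ => ?_
        simp only [φ, ← mul_assoc, ← exp_add]
        push_cast
        ring_nf
    _ = exp (2 * π * I * t) * ∫ s in t..t + 1, φ s := by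
        rw [intervalIntegral.integral_const_mul, intervalIntegral.integral_comp_add_right,
          zero_add, add_comm 1 t]
    _ = exp (2 * π * I * t) * ∫ s in (0 : ℝ)..1, φ s := by
        rw [hφ.intervalIntegral_add_eq t 0, zero_add]

structure IsPeriodicHolomorphicFlowOn (f : ℝ → ℂ → ℂ) (U : Set ℂ) : Prop where
  differentiableOn : ∀ t, DifferentiableOn ℂ (f t) U
  continuous_apply : ∀ z ∈ U, Continuous fun t => f t z
  apply_apply : ∀ s t, ∀ z ∈ U, f t z ∈ U → f s (f t z) = f (s + t) z
  periodic : Periodic f 1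
  map_zero : ∀ t, f t 0 = 0

namespace IsPeriodicHolomorphicFlowOn

variable {f : ℝ → ℂ → ℂ} {U : Set ℂ}

/-- The Baire category theorem gives a bound on a closed ball around `0` for all times in an
interval; the flow transports it to all times, since `f τ` maps a neighbourhood of `0` into that
ball. -/
theorem exists_bound_near_zero (hf : IsPeriodicHolomorphicFlowOn f U) (hU : IsOpen U)
    (h0U : (0 : ℂ) ∈ U) : ∃ C, ∀ᶠ z in 𝓝 (0 : ℂ), ∀ t, ‖f t z‖ ≤ C := by
  obtain ⟨ρ, hρ, hρU⟩ := nhds_basis_closedBall.mem_iff.1 (hU.mem_nhds h0U)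
  set A : ℕ → Set ℝ := fun n => {t | ∀ z ∈ closedBall (0 : ℂ) ρ, ‖f t z‖ ≤ n}
  have hA_closed : ∀ n, IsClosed (A n) := fun n => by
    simp only [A, ofPred_forall]
    exact isClosed_biInter fun z hz =>
      isClosed_le (hf.continuous_apply z (hρU hz)).norm continuous_const
  have hA_cover : ⋃ n, A n = univ := eq_univ_of_forall fun t => by
    obtain ⟨M, hM⟩ := (isCompact_closedBall (0 : ℂ) ρ).exists_bound_of_continuousOn
      ((hf.differentiableOn t).continuousOn.mono hρU)
    exact mem_iUnion.2 ⟨⌈M⌉₊, fun z hz => (hM z hz).trans (Nat.le_ceil M)⟩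
  obtain ⟨n, t₀, ht₀⟩ := nonempty_interior_of_iUnion_of_closed hA_closed hA_cover
  have hloc : ∀ T : ℝ, ∀ᶠ p : ℂ × ℝ in 𝓝 (0, T), ‖f p.2 p.1‖ ≤ n := by
    intro T
    have hmaps : ∀ᶠ z in 𝓝 (0 : ℂ), z ∈ U ∧ f (T - t₀) z ∈ closedBall 0 ρ := by
      have hcont := ((hf.differentiableOn (T - t₀)).differentiableAt (hU.mem_nhds h0U)).continuousAt
      refine Filter.Eventually.and (hU.mem_nhds h0U) (hcont.preimage_mem_nhds ?_)
      rw [hf.map_zero]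
      exact closedBall_mem_nhds 0 hρ
    have htime : ∀ᶠ u in 𝓝 T, u - (T - t₀) ∈ interior (A n) :=
      (continuous_sub_right _).continuousAt.preimage_mem_nhds
        (by simpa using isOpen_interior.mem_nhds ht₀)
    rw [nhds_prod_eq]
    filter_upwards [hmaps.prod_mk htime] with ⟨z, u⟩ ⟨⟨hz, hfz⟩, hu⟩
    rw [← sub_add_cancel u (T - t₀), ← hf.apply_apply _ _ z hz (hρU hfz)]
    exact interior_subset hu _ hfz
  refine ⟨n, ?_⟩
  filter_upwards [isCompact_Icc.eventually_forall_of_forall_eventually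
    (P := fun z t => ‖f t z‖ ≤ n) (fun T (_ : T ∈ Icc (0 : ℝ) 1) => hloc T)] with z hz t
  obtain ⟨s, hs, hts⟩ := hf.periodic.exists_mem_Ico₀ one_pos t
  rw [hts]
  exact hz s (Ico_subset_Icc_self hs)

theorem exists_norm_le_mul_norm (hf : IsPeriodicHolomorphicFlowOn f U) (hU : IsOpen U)
    (h0U : (0 : ℂ) ∈ U) : ∃ K > 0, ∀ᶠ z in 𝓝 (0 : ℂ), ∀ t, ‖f t z‖ ≤ K * ‖z‖ := by
  obtain ⟨C, hC⟩ := hf.exists_bound_near_zero hU h0U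
  obtain ⟨δ, hδ, hδC⟩ := Metric.eventually_nhds_iff_ball.1 (hC.and (hU.mem_nhds h0U))
  refine ⟨max C 1 / δ, by positivity, ?_⟩
  filter_upwards [ball_mem_nhds 0 hδ] with z hz t
  have hmaps : MapsTo (f t) (ball 0 δ) (closedBall (f t 0) (max C 1)) := fun w hw => by
    rw [hf.map_zero, mem_closedBall_zero_iff]
    exact ((hδC w hw).1 t).trans (le_max_left _ _)
  simpa [hf.map_zero] using Complex.dist_le_div_mul_dist_of_mapsTo_ball
    ((hf.differentiableOn t).mono fun w hw => (hδC w hw).2) hmaps hz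

theorem exists_le_norm (hf : IsPeriodicHolomorphicFlowOn f U) (hU : IsOpen U)
    (h0U : (0 : ℂ) ∈ U) (hid : EqOn (f 0) id U) {z₀ : ℂ} (hz₀ : z₀ ∈ U) (hz₀' : z₀ ≠ 0) :
    ∃ ρ > 0, ∀ᶠ z in 𝓝 z₀, ∀ t, ρ ≤ ‖f t z‖ := by
  obtain ⟨K, hK, hKz⟩ := hf.exists_norm_le_mul_norm hU h0U
  obtain ⟨δ, hδ, hδK⟩ := Metric.eventually_nhds_iff_ball.1 (hKz.and (hU.mem_nhds h0U))
  have hz₀pos : 0 < ‖z₀‖ := norm_pos_iff.2 hz₀'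
  refine ⟨min δ (‖z₀‖ / (2 * K)), by positivity, ?_⟩
  filter_upwards [(continuous_norm.tendsto z₀).eventually (lt_mem_nhds (half_lt_self hz₀pos)),
    hU.mem_nhds hz₀] with z hz hzU t
  by_contra! hlt
  have hball : f t z ∈ ball 0 δ := mem_ball_zero_iff.2 (hlt.trans_le (min_le_left _ _))
  have hback : f (-t) (f t z) = z := by
    rw [hf.apply_apply _ _ _ hzU (hδK _ hball).2, neg_add_cancel, hid hzU, id]
  have hzK : ‖z‖ ≤ K * ‖f t z‖ := by
    calc ‖z‖ = ‖f (-t) (f t z)‖ := by rw [hback]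
      _ ≤ K * ‖f t z‖ := (hδK _ hball).1 (-t)
  have : K * ‖f t z‖ < ‖z₀‖ / 2 := by
    calc K * ‖f t z‖ < K * (‖z₀‖ / (2 * K)) :=
          mul_lt_mul_of_pos_left (hlt.trans_le (min_le_right _ _)) hK
      _ = ‖z₀‖ / 2 := by field_simp
  linarith

theorem exists_bound (hf : IsPeriodicHolomorphicFlowOn f U) (hU : IsOpen U)
    (h0U : (0 : ℂ) ∈ U) (hid : EqOn (f 0) id U) {z₀ : ℂ} (hz₀ : z₀ ∈ U) :
    ∃ C, ∀ᶠ z in 𝓝 z₀, ∀ t, ‖f t z‖ ≤ C := by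
  rcases eq_or_ne z₀ 0 with rfl | hz₀'
  · exact hf.exists_bound_near_zero hU h0U
  obtain ⟨ρ, hρ, hρz⟩ := hf.exists_le_norm hU h0U hid hz₀ hz₀'
  obtain ⟨s, hs, hsρ⟩ := Metric.eventually_nhds_iff_ball.1 (hρz.and (hU.mem_nhds hz₀))
  obtain ⟨M, hM⟩ := isBounded_iff_forall_norm_le.1
    (Periodic.isBounded_of_continuous (f := fun t => f t z₀)
      (fun t => congrFun (hf.periodic t) z₀) one_ne_zero (hf.continuous_apply z₀ hz₀))
  refine ⟨Real.exp (2 + 3 * π) * M ^ 3 / ρ ^ 2, ?_⟩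
  filter_upwards [ball_mem_nhds z₀ (half_pos hs)] with z hz t
  calc ‖f t z‖ ≤ Real.exp (2 + 3 * π) * ‖f t z₀‖ ^ 3 / ρ ^ 2 :=
        norm_le_of_le_norm_on_ball ((hf.differentiableOn t).mono fun w hw => (hsρ w hw).2) hρ
          (fun w hw => (hsρ w hw).1 t) hz
    _ ≤ Real.exp (2 + 3 * π) * M ^ 3 / ρ ^ 2 := by
        gcongr
        exact hM _ (mem_range_self t)

end IsPeriodicHolomorphicFlowOn

theorem averaged_flow_linearizes_general
    (r : ℝ) (hr : 0 < r) (f : ℝ → ℂ → ℂ)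
    (hper : ∀ t : ℝ, f (t + 1) = f t)
    (hdiff : ∀ t : ℝ, DifferentiableOn ℂ (f t) (Metric.ball 0 r))
    (h0 : ∀ t : ℝ, f t 0 = 0)
    (hder : ∀ t : ℝ, deriv (f t) 0 = Complex.exp (2 * Real.pi * Complex.I * (t : ℂ)))
    (hcont : ∀ z ∈ Metric.ball (0 : ℂ) r, Continuous fun t : ℝ => f t z)
    (hflow : ∀ s t : ℝ, ∀ z ∈ Metric.ball (0 : ℂ) r, f t z ∈ Metric.ball (0 : ℂ) r →
      f s (f t z) = f (s + t) z) :
    DifferentiableOn ℂ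
      (fun z : ℂ => ∫ t in (0 : ℝ)..1, Complex.exp (-(2 * Real.pi * Complex.I * (t : ℂ))) * f t z)
      (Metric.ball 0 r) ∧
    (∫ t in (0 : ℝ)..1, Complex.exp (-(2 * Real.pi * Complex.I * (t : ℂ))) * f t 0) = 0 ∧
    deriv
      (fun z : ℂ => ∫ t in (0 : ℝ)..1, Complex.exp (-(2 * Real.pi * Complex.I * (t : ℂ))) * f t z)
      0 = 1 ∧
    ∀ t : ℝ, ∀ z ∈ Metric.ball (0 : ℂ) r, f t z ∈ Metric.ball (0 : ℂ) r →
      (∫ s in (0 : ℝ)..1, Complex.exp (-(2 * Real.pi * Complex.I * (s : ℂ))) * f s (f t z)) =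
        Complex.exp (2 * Real.pi * Complex.I * (t : ℂ)) *
          ∫ s in (0 : ℝ)..1, Complex.exp (-(2 * Real.pi * Complex.I * (s : ℂ))) * f s z := by
  have hf : IsPeriodicHolomorphicFlowOn f (ball 0 r) := ⟨hdiff, hcont, hflow, hper, h0⟩
  have h0U : (0 : ℂ) ∈ ball 0 r := mem_ball_self hr
  have hid : EqOn (f 0) id (ball 0 r) :=
    eqOn_id_of_idempotent (hdiff 0) isOpen_ball (convex_ball 0 r).isPreconnected h0U (h0 0)
      (by simp [hder]) fun z hz hfz => by simpa using hflow 0 0 z hz hfz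
  have hderiv : ∀ z ∈ ball (0 : ℂ) r,
      HasDerivAt (fun z => ∫ t in (0 : ℝ)..1, exp (-(2 * π * I * t)) * f t z)
        (∫ t in (0 : ℝ)..1, exp (-(2 * π * I * t)) * deriv (f t) z) z := by
    intro z hz
    obtain ⟨C, hC⟩ := hf.exists_bound isOpen_ball h0U hid hz
    have := hasDerivAt_integral_of_locally_bounded (μ := volume.restrict (Ioc (0 : ℝ) 1))
      (F := fun (t : ℝ) w => exp (-(2 * π * I * t)) * f t w) isOpen_ball hz
      (fun t => (hdiff t).const_mul _)
      (fun w hw => ((continuous_exp.comp (by fun_prop)).mul (hcont w hw)).aestronglyMeasurable)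
      ⟨C, hC.mono fun w hw t => by simpa [norm_exp] using hw t⟩
    simpa only [intervalIntegral.integral_of_le zero_le_one, deriv_const_mul_field'] using this
  refine ⟨fun z hz => (hderiv z hz).differentiableAt.differentiableWithinAt, by simp [h0], ?_, ?_⟩
  · rw [(hderiv 0 h0U).deriv]
    simp [hder, ← exp_add]
  · intro t z hz hfz
    simp_rw [hflow _ t z hz hfz]
    exact integral_exp_mul_comp_add (g := fun s => f s z) (fun s => congrFun (hper s) z) t

/-- Averaging a periodic flow of univalent maps: if `(f_t)` is a family of injective
holomorphic maps on `𝔻_r` with `f_{t+1} = f_t`, `f_t(0) = 0`, `f_t'(0) = e^{2πit}`,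
continuous in `t`, satisfying the flow property `f_s ∘ f_t = f_{s+t}` where defined,
then `h(z) = ∫₀¹ e^{-2πit} f_t(z) dt` is holomorphic on `𝔻_r` with `h(0) = 0`,
`h'(0) = 1`, and `h(f_t(z)) = e^{2πit} h(z)` wherever `z, f_t(z) ∈ 𝔻_r`. -/
theorem averaged_flow_linearizes
    (r : ℝ) (hr : 0 < r) (f : ℝ → ℂ → ℂ)
    (hper : ∀ t : ℝ, f (t + 1) = f t)
    (hdiff : ∀ t : ℝ, DifferentiableOn ℂ (f t) (Metric.ball 0 r))
    (hinj : ∀ t : ℝ, Set.InjOn (f t) (Metric.ball 0 r))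
    (h0 : ∀ t : ℝ, f t 0 = 0)
    (hder : ∀ t : ℝ, deriv (f t) 0 = Complex.exp (2 * Real.pi * Complex.I * (t : ℂ)))
    (hcont : ∀ z ∈ Metric.ball (0 : ℂ) r, Continuous fun t : ℝ => f t z)
    (hflow : ∀ s t : ℝ, ∀ z ∈ Metric.ball (0 : ℂ) r, f t z ∈ Metric.ball (0 : ℂ) r →
      f s (f t z) = f (s + t) z) :
    DifferentiableOn ℂ
      (fun z : ℂ => ∫ t in (0 : ℝ)..1, Complex.exp (-(2 * Real.pi * Complex.I * (t : ℂ))) * f t z)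
      (Metric.ball 0 r) ∧
    (∫ t in (0 : ℝ)..1, Complex.exp (-(2 * Real.pi * Complex.I * (t : ℂ))) * f t 0) = 0 ∧
    deriv
      (fun z : ℂ => ∫ t in (0 : ℝ)..1, Complex.exp (-(2 * Real.pi * Complex.I * (t : ℂ))) * f t z)
      0 = 1 ∧
    ∀ t : ℝ, ∀ z ∈ Metric.ball (0 : ℂ) r, f t z ∈ Metric.ball (0 : ℂ) r →
      (∫ s in (0 : ℝ)..1, Complex.exp (-(2 * Real.pi * Complex.I * (s : ℂ))) * f s (f t z)) =
        Complex.exp (2 * Real.pi * Complex.I * (t : ℂ)) *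
          ∫ s in (0 : ℝ)..1, Complex.exp (-(2 * Real.pi * Complex.I * (s : ℂ))) * f s z :=
  averaged_flow_linearizes_general r hr f hper hdiff h0 hder hcont hflow
end

section
/- Let N ≥ 2 be an integer and τ > 0. There exists a constant k > 0, depending only on N and τ, with the following property: if C > 0, (α_1, …, α_N) ∈ DC_N(C, τ), and w ∈ {1, …, N}, then the image under the Gauss map satisfies G(α_1, …, α_N, w) ∈ DC_N(k·C·α_w^{τ′−1}, τ), where τ′ = Nτ + N − 1. -/
/-- `1, α 1, …, α N` are linearly independent over `ℚ`. -/
def RatIndep {N : ℕ} (α : Fin N → ℝ) : Prop :=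
  ∀ (q : ℤ) (p : Fin N → ℤ),
    (q : ℝ) + ∑ i, (p i : ℝ) * α i = 0 → q = 0 ∧ ∀ i, p i = 0

/-- The Gauss map `G(α₁,…,α_N, w)`: with `α̂ᵢ = αᵢ` for `i ≠ w`, `α̂_w = 1`,
and `aᵢ` the integer closest to `α̂ᵢ / α_w`, we set `α̃ᵢ = |aᵢ α_w − α̂ᵢ| / α_w`. -/
noncomputable def gaussStep {N : ℕ} (α : Fin N → ℝ) (w : Fin N) : Fin N → ℝ :=
  fun i =>
    let x : ℝ := (if i = w then (1 : ℝ) else α i) / α w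
    |(round x : ℝ) - x|

/-- Moser's Diophantine class `DC_N(C, τ)`: tuples of rationally independent irrationals
in `(0,1)` with `max_j |q α_j − p_j| ≥ C / |q|^τ` for all integers `p_j` and `q ≠ 0`. -/
def DCN {N : ℕ} (C τ : ℝ) (α : Fin N → ℝ) : Prop :=
  (∀ i, α i ∈ Set.Ioo (0 : ℝ) 1) ∧ RatIndep α ∧
  ∀ q : ℤ, q ≠ 0 → ∀ p : Fin N → ℤ,
    ∃ j, C / |(q : ℝ)| ^ τ ≤ |(q : ℝ) * α j - (p j : ℝ)|

/-!
Write `A = α_w` and `α̂` for `α` with its `w`-th entry replaced by `1`. The signed defects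
`γ_i = a_i - α̂_i / A` satisfy `A γ_i = a_i A - α̂_i` with `a_i ∈ ℤ`, so an integer relation among
`1, γ` becomes one among `1, α`, and the Gauss map `|γ|` only flips signs of integers.
If `|q γ_i - p_i| ≤ δ` for all `i`, then `n_i = q a_i - p_i` satisfies `n_i A ≈ q α̂_i`; with
`m = n_w` the identity `q (m α_i - n_i) = n_i (m A - q) - m (n_i A - q α_i)` gives
`|m α_i - n_i| ≤ 3 δ` with `|m| A ≤ 3|q|/2`, and the Diophantine condition on `α` at `m` bounds `δ`
from below by a multiple of `C A^τ / |q|^τ`.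
-/

open Finset

section

variable {N : ℕ}

def SimulDiophantine (C τ : ℝ) (α : Fin N → ℝ) : Prop :=
  ∀ q : ℤ, q ≠ 0 → ∀ p : Fin N → ℤ, ∃ j, C / |(q : ℝ)| ^ τ ≤ |(q : ℝ) * α j - (p j : ℝ)|

noncomputable def gaussDefect (α : Fin N → ℝ) (w : Fin N) (i : Fin N) : ℝ :=
  let x : ℝ := (if i = w then (1 : ℝ) else α i) / α w
  (round x : ℝ) - x

theorem gaussStep_eq_abs_gaussDefect (α : Fin N → ℝ) (w : Fin N) :
    gaussStep α w = fun i => |gaussDefect α w i| :=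
  rfl

theorem abs_gaussDefect_le (α : Fin N → ℝ) (w i : Fin N) : |gaussDefect α w i| ≤ 1 / 2 := by
  rw [gaussDefect, abs_sub_comm]
  exact abs_sub_round _

theorem exists_int_mul_gaussDefect {α : Fin N → ℝ} {w : Fin N} (hw : α w ≠ 0) :
    ∃ a : Fin N → ℤ, ∀ i,
      α w * gaussDefect α w i = a i * α w - if i = w then 1 else α i :=
  ⟨fun i => round ((if i = w then (1 : ℝ) else α i) / α w), fun i => by
    simp only [gaussDefect]
    field_simp⟩

theorem int_mul_abs_eq (p : ℤ) (t : ℝ) :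
    (p : ℝ) * |t| = ((if 0 ≤ t then p else -p : ℤ) : ℝ) * t := by
  split_ifs with h
  · rw [abs_of_nonneg h]
  · rw [abs_of_neg (not_le.1 h)]; push_cast; ring

theorem abs_mul_abs_sub_int (q t : ℝ) (p : ℤ) :
    |q * |t| - p| = |q * t - ((if 0 ≤ t then p else -p : ℤ) : ℝ)| := by
  split_ifs with h
  · rw [abs_of_nonneg h]
  · rw [abs_of_neg (not_le.1 h), ← abs_neg]; push_cast; ring_nf

theorem abs_mul_abs_mul_sub_le (A y m n q : ℝ) :
    |q| * |m * y - n| ≤ |n| * |m * A - q| + |m| * |n * A - q * y| := by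
  rw [← abs_mul, ← abs_mul, ← abs_mul]
  calc |q * (m * y - n)| = |n * (m * A - q) - m * (n * A - q * y)| := by ring_nf
    _ ≤ _ := abs_sub _ _

namespace RatIndep

theorem ne_zero {α : Fin N → ℝ} (h : RatIndep α) (i : Fin N) : α i ≠ 0 := by
  intro hi
  have := (h 0 (Pi.single i 1) (by simp [Pi.single_apply, hi])).2 i
  simp at this

theorem abs {γ : Fin N → ℝ} (h : RatIndep γ) : RatIndep fun i => |γ i| := by
  intro q p hqp
  simp only [int_mul_abs_eq] at hqp
  obtain ⟨hq, hp⟩ := h q _ hqp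
  refine ⟨hq, fun i => ?_⟩
  have := hp i
  split_ifs at this <;> omega

theorem of_mul_eq {α γ : Fin N → ℝ} {w : Fin N} {a : Fin N → ℤ} (h : RatIndep α)
    (hγ : ∀ i, α w * γ i = a i * α w - if i = w then 1 else α i) : RatIndep γ := by
  intro q p hqp
  set c : ℤ := q + ∑ j, p j * a j + p w
  have key : ((-p w : ℤ) : ℝ) + ∑ i, ((-p i + if i = w then c else 0 : ℤ) : ℝ) * α i =
      α w * (q + ∑ i, p i * γ i) := by
    have hhat : ∀ i, (if i = w then 1 else α i) = α i + if i = w then 1 - α w else 0 := by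
      intro i; split_ifs with hi
      · rw [hi]; ring
      · ring
    rw [mul_add, mul_sum]
    simp_rw [mul_left_comm (α w), hγ, hhat]
    push_cast
    simp only [mul_sub, mul_add, add_mul, ite_mul, mul_ite, zero_mul, mul_zero, sum_add_distrib,
      sum_sub_distrib, Fintype.sum_ite_eq', c]
    push_cast
    simp only [neg_mul, sum_neg_distrib, ← mul_assoc, ← sum_mul]
    ring
  obtain ⟨hpw, hP⟩ := h _ _ (by rw [key, hqp, mul_zero])
  have hp : ∀ i, p i = 0 := fun i => by
    have := hP i
    split_ifs at this with hi
    · subst hi; omega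
    · omega
  exact ⟨by simpa [hp, c] using hP w, hp⟩

end RatIndep

namespace SimulDiophantine

variable {C τ : ℝ}

theorem le_half {α : Fin N → ℝ} (h : SimulDiophantine C τ α) : C ≤ 1 / 2 := by
  obtain ⟨j, hj⟩ := h 1 one_ne_zero fun i => round (α i)
  simp only [Int.cast_one, abs_one, Real.one_rpow, div_one, one_mul] at hj
  exact hj.trans (abs_sub_round _)

theorem mono {α : Fin N → ℝ} {C' : ℝ} (h : SimulDiophantine C τ α) (hC : C' ≤ C) :
    SimulDiophantine C' τ α :=
  fun q hq p => (h q hq p).imp fun _ hj => le_trans (by gcongr) hj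

theorem abs {γ : Fin N → ℝ} (h : SimulDiophantine C τ γ) :
    SimulDiophantine C τ fun i => |γ i| := by
  intro q hq p
  obtain ⟨j, hj⟩ := h q hq fun i => if 0 ≤ γ i then p i else -p i
  exact ⟨j, by rwa [abs_mul_abs_sub_int]⟩

end SimulDiophantine

section Transfer

variable {α γ : Fin N → ℝ} {w : Fin N} {a : Fin N → ℤ}

theorem exists_approx_of_approx_mul_eq (hA : 0 < α w) (hα : ∀ i, |α i| ≤ 1)
    (hγ : ∀ i, α w * γ i = a i * α w - if i = w then 1 else α i)
    {q : ℤ} (hq : q ≠ 0) {p : Fin N → ℤ} {δ : ℝ} (hδ : α w * δ ≤ 1 / 2)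
    (happrox : ∀ i, |q * γ i - p i| ≤ δ) :
    ∃ m : ℤ, m ≠ 0 ∧ |(m : ℝ)| * α w ≤ 3 / 2 * |(q : ℝ)| ∧
      ∃ p' : Fin N → ℤ, ∀ i, |m * α i - p' i| ≤ 3 * δ := by
  set n : Fin N → ℤ := fun i => q * a i - p i
  have hq1 : (1 : ℝ) ≤ |(q : ℝ)| := by exact_mod_cast Int.one_le_abs hq
  have hn : ∀ i, |(n i : ℝ) * α w - q * (if i = w then 1 else α i)| ≤ α w * δ := fun i => by
    calc |(n i : ℝ) * α w - q * (if i = w then 1 else α i)| = α w * |q * γ i - p i| := by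
          rw [← abs_of_pos hA, ← abs_mul, abs_of_pos hA]
          congr 1
          simp only [n]
          push_cast
          linear_combination -(q : ℝ) * hγ i
      _ ≤ α w * δ := by gcongr; exact happrox i
  have hn_le : ∀ i, |(n i : ℝ)| * α w ≤ 3 / 2 * |(q : ℝ)| := fun i => by
    have hhat : |(if i = w then 1 else α i)| ≤ 1 := by split_ifs <;> simp [hα]
    have hqhat : |(q : ℝ) * (if i = w then 1 else α i)| ≤ |(q : ℝ)| := by
      rw [abs_mul]; exact mul_le_of_le_one_right (abs_nonneg _) hhat
    have := abs_sub_abs_le_abs_sub ((n i : ℝ) * α w) (q * (if i = w then 1 else α i))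
    rw [abs_mul, abs_of_pos hA] at this
    linarith [hn i]
  set m := n w
  have hm : |(m : ℝ) * α w - q| ≤ α w * δ := by simpa using hn w
  have hm0 : m ≠ 0 := by
    intro h
    rw [h, Int.cast_zero, zero_mul, zero_sub, abs_neg] at hm
    linarith
  have hδ0 : 0 ≤ δ := nonneg_of_mul_nonneg_right ((abs_nonneg _).trans hm) hA
  refine ⟨m, hm0, hn_le w, fun i => if i = w then q else n i, fun i => ?_⟩
  rcases eq_or_ne i w with rfl | hi
  · have : α i ≤ 1 := (le_abs_self _).trans (hα i)
    simpa using hm.trans (by nlinarith)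
  · simp only [hi, if_false]
    have hni := hn i
    rw [if_neg hi] at hni
    refine le_of_mul_le_mul_left ?_ (zero_lt_one.trans_le hq1)
    calc |(q : ℝ)| * |m * α i - n i|
        ≤ |(n i : ℝ)| * |m * α w - q| + |(m : ℝ)| * |n i * α w - q * α i| :=
          abs_mul_abs_mul_sub_le _ _ _ _ _
      _ ≤ |(n i : ℝ)| * (α w * δ) + |(m : ℝ)| * (α w * δ) := by gcongr
      _ = (|(n i : ℝ)| * α w + |(m : ℝ)| * α w) * δ := by ring
      _ ≤ (3 / 2 * |(q : ℝ)| + 3 / 2 * |(q : ℝ)|) * δ :=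
          mul_le_mul_of_nonneg_right (add_le_add (hn_le i) (hn_le w)) hδ0
      _ = |(q : ℝ)| * (3 * δ) := by ring

theorem SimulDiophantine.of_mul_eq {C τ : ℝ}
    (hτ : 0 ≤ τ) (hC : 0 < C) (h : SimulDiophantine C τ α) (hA : 0 < α w)
    (hα : ∀ i, |α i| ≤ 1) (hγ : ∀ i, α w * γ i = a i * α w - if i = w then 1 else α i) :
    SimulDiophantine ((6 * (3 / 2 : ℝ) ^ τ)⁻¹ * C * α w ^ τ) τ γ := by
  intro q hq p
  by_contra! happrox
  set k := (6 * (3 / 2 : ℝ) ^ τ)⁻¹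
  set δ := k * C * α w ^ τ / |(q : ℝ)| ^ τ
  have hk : k ≤ 1 := by
    refine inv_le_one_of_one_le₀ ?_
    have : (1 : ℝ) ≤ (3 / 2) ^ τ := Real.one_le_rpow (by norm_num) hτ
    linarith
  have hA1 : α w ≤ 1 := (le_abs_self _).trans (hα w)
  have hq1 : (1 : ℝ) ≤ |(q : ℝ)| ^ τ := Real.one_le_rpow (by exact_mod_cast Int.one_le_abs hq) hτ
  have hδ : α w * δ ≤ 1 / 2 :=
    calc α w * δ ≤ δ := mul_le_of_le_one_left (by positivity) hA1
      _ ≤ k * C * α w ^ τ := div_le_self (by positivity) hq1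
      _ ≤ 1 * (1 / 2) * 1 := by
          gcongr
          exacts [h.le_half, Real.rpow_le_one hA.le hA1 hτ]
      _ = 1 / 2 := by norm_num
  obtain ⟨m, hm0, hmq, p', hp'⟩ :=
    exists_approx_of_approx_mul_eq hA hα hγ hq hδ fun i => (happrox i).le
  obtain ⟨j, hj⟩ := h m hm0 p'
  have hmτ : (|(m : ℝ)| * α w) ^ τ ≤ (3 / 2 : ℝ) ^ τ * |(q : ℝ)| ^ τ := by
    rw [← Real.mul_rpow (by norm_num) (abs_nonneg _)]
    gcongr
  have hmpos : 0 < |(m : ℝ)| ^ τ := by positivity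
  have : C ≤ C / 2 :=
    calc C ≤ 3 * δ * |(m : ℝ)| ^ τ := (div_le_iff₀ hmpos).1 (hj.trans (hp' j))
      _ = 3 * k * C * (|(m : ℝ)| * α w) ^ τ / |(q : ℝ)| ^ τ := by
          rw [Real.mul_rpow (abs_nonneg _) hA.le]; ring
      _ ≤ 3 * k * C * ((3 / 2 : ℝ) ^ τ * |(q : ℝ)| ^ τ) / |(q : ℝ)| ^ τ := by gcongr
      _ = C / 2 := by simp only [k]; field_simp; ring
  linarith

end Transfer

end

/-- The Gauss map preserves the Diophantine class: there is `k = k(N, τ) > 0` such that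
`(α₁,…,α_N) ∈ DC_N(C, τ)` implies `G(α₁,…,α_N, w) ∈ DC_N(k C α_w^{τ'-1}, τ)` where
`τ' = Nτ + N − 1`. -/
theorem gauss_preserves_diophantine (N : ℕ) (hN : 2 ≤ N) (τ : ℝ) (hτ : 0 < τ) :
    ∃ k : ℝ, 0 < k ∧
      ∀ C : ℝ, 0 < C → ∀ α : Fin N → ℝ, DCN C τ α → ∀ w : Fin N,
        DCN (k * C * α w ^ ((N : ℝ) * τ + (N : ℝ) - 1 - 1)) τ (gaussStep α w) := by
  refine ⟨(6 * (3 / 2 : ℝ) ^ τ)⁻¹, by positivity, fun C hC α ⟨hrange, hindep, hdc⟩ w => ?_⟩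
  have hA : 0 < α w := (hrange w).1
  have hα : ∀ i, |α i| ≤ 1 := fun i => abs_le.2 ⟨by linarith [(hrange i).1], (hrange i).2.le⟩
  obtain ⟨a, ha⟩ := exists_int_mul_gaussDefect hA.ne'
  have hγ : RatIndep (gaussDefect α w) := hindep.of_mul_eq ha
  have hexp : τ ≤ (N : ℝ) * τ + N - 1 - 1 := by
    have : (2 : ℝ) ≤ N := by exact_mod_cast hN
    nlinarith
  rw [gaussStep_eq_abs_gaussDefect]
  refine ⟨fun i => ⟨abs_pos.2 (hγ.ne_zero i), (abs_gaussDefect_le α w i).trans_lt (by norm_num)⟩,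
    hγ.abs, (SimulDiophantine.of_mul_eq hτ.le hC hdc hA hα ha).abs.mono ?_⟩
  exact mul_le_mul_of_nonneg_left
    (Real.rpow_le_rpow_of_exponent_ge hA (hrange w).2.le hexp) (by positivity)
end

section
/- Let N ≥ 2 be an integer and τ > 0. There exists a constant k > 0, depending only on N and τ, with the following property: if C > 0, (α_1, …, α_N) ∈ DC_N(C, τ), w ∈ {1, …, N}, and (α̃_1, …, α̃_N) = G(α_1, …, α_N, w), then there exists an index j ∈ {1, …, N} such that α̃_j ≥ k·C·α_w^τ. -/
/-!
Write `aᵢ` for the integer nearest to `α̂ᵢ / α_w`, so that `α_w α̃ᵢ = |aᵢ α_w − α̂ᵢ|`; all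
`|aᵢ| α_w` are at most `3/2` and `a_w ≥ 1`. Test the Diophantine condition with `q = a_w`,
`p_w = 1` and `p_j = a_j` for `j ≠ w`. The identity
`a_w α_j − a_j = a_w (α_j − a_j α_w) + a_j (a_w α_w − 1)` bounds every `|q α_j − p_j|` by
`3 max_i α̃ᵢ`, while the condition bounds one of them below by `C / a_w^τ ≥ C (2 α_w / 3)^τ`.
-/

theorem abs_round_le_abs_add_half (x : ℝ) : |(round x : ℝ)| ≤ |x| + 1 / 2 := by
  have hx := abs_sub_round x
  calc |(round x : ℝ)| = |x - (x - round x)| := by ring_nf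
    _ ≤ |x| + |x - round x| := abs_sub _ _
    _ ≤ |x| + 1 / 2 := by linarith

theorem mul_rpow_le_div_rpow {q a b C τ : ℝ} (hq : 0 < q) (ha : 0 < a) (hqa : q * a ≤ b)
    (hC : 0 ≤ C) (hτ : 0 ≤ τ) : C * (a / b) ^ τ ≤ C / q ^ τ := by
  have hb : 0 < b := lt_of_lt_of_le (mul_pos hq ha) hqa
  have hab : a / b ≤ q⁻¹ := by
    rw [div_le_iff₀ hb, ← div_eq_inv_mul, le_div_iff₀ hq, mul_comm]
    exact hqa
  calc C * (a / b) ^ τ ≤ C * q⁻¹ ^ τ := by gcongr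
    _ = C / q ^ τ := by rw [Real.inv_rpow hq.le, div_eq_mul_inv]

noncomputable section GaussMap

variable {N : ℕ} (α : Fin N → ℝ) (w : Fin N)

/-- `α̂` of the Gauss map; `gaussDigit α w i` is `aᵢ`. -/
def gaussHat (i : Fin N) : ℝ := if i = w then 1 else α i

def gaussDigit (i : Fin N) : ℤ := round (gaussHat α w i / α w)

def gaussNumerator (i : Fin N) : ℤ := if i = w then 1 else gaussDigit α w i

theorem gaussStep_eq (i : Fin N) :
    gaussStep α w i = |(gaussDigit α w i : ℝ) - gaussHat α w i / α w| := rfl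

theorem gaussStep_nonneg (i : Fin N) : 0 ≤ gaussStep α w i := abs_nonneg _

variable {α w}

theorem mul_gaussStep (hw : 0 < α w) (i : Fin N) :
    α w * gaussStep α w i = |(gaussDigit α w i : ℝ) * α w - gaussHat α w i| := by
  rw [gaussStep_eq, ← abs_of_pos hw, ← abs_mul, abs_of_pos hw]
  congr 1
  field_simp

theorem abs_gaussDigit_mul_le (hα : ∀ i, α i ∈ Set.Ioo 0 1) (i : Fin N) :
    |(gaussDigit α w i : ℝ)| * α w ≤ 3 / 2 := by
  obtain ⟨hw0, hw1⟩ := hα w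
  have hhat : |gaussHat α w i| ≤ 1 := by
    unfold gaussHat
    split_ifs
    · simp
    · exact abs_le.2 ⟨by linarith [(hα i).1], (hα i).2.le⟩
  calc |(gaussDigit α w i : ℝ)| * α w ≤ (|gaussHat α w i / α w| + 1 / 2) * α w := by
        gcongr
        exact abs_round_le_abs_add_half _
    _ = |gaussHat α w i| + α w / 2 := by
        rw [abs_div, abs_of_pos hw0]
        field_simp
    _ ≤ 3 / 2 := by linarith

theorem one_le_gaussDigit_self (hw : α w ∈ Set.Ioo 0 1) : 1 ≤ gaussDigit α w w := by
  obtain ⟨hw0, hw1⟩ := hw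
  have hinv : 1 < gaussHat α w w / α w := by
    rw [gaussHat, if_pos rfl, lt_div_iff₀ hw0]
    linarith
  rw [gaussDigit, round_eq, Int.le_floor, Int.cast_one]
  linarith

theorem gaussDigit_self_mul_le (hα : ∀ i, α i ∈ Set.Ioo 0 1) :
    (gaussDigit α w w : ℝ) * α w ≤ 3 / 2 := by
  have hq : (1 : ℝ) ≤ gaussDigit α w w := by exact_mod_cast one_le_gaussDigit_self (hα w)
  simpa only [abs_of_nonneg (zero_le_one.trans hq)] using abs_gaussDigit_mul_le (w := w) hα w

theorem abs_gaussDigit_mul_sub_gaussNumerator_le (hα : ∀ i, α i ∈ Set.Ioo 0 1) {M : ℝ}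
    (hM : ∀ i, gaussStep α w i ≤ M) (j : Fin N) :
    |(gaussDigit α w w : ℝ) * α j - gaussNumerator α w j| ≤ 3 * M := by
  obtain ⟨hw0, hw1⟩ := hα w
  have hM0 : 0 ≤ M := (gaussStep_nonneg α w w).trans (hM w)
  have hself : |(gaussDigit α w w : ℝ) * α w - 1| = α w * gaussStep α w w := by
    rw [mul_gaussStep hw0, gaussHat, if_pos rfl]
  have hqw : 0 ≤ (gaussDigit α w w : ℝ) := by
    exact_mod_cast (zero_le_one.trans (one_le_gaussDigit_self (hα w)))
  by_cases hjw : j = w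
  · rw [hjw, gaussNumerator, if_pos rfl, Int.cast_one, hself]
    nlinarith [gaussStep_nonneg α w w, hM w]
  have hj : |α j - (gaussDigit α w j : ℝ) * α w| = α w * gaussStep α w j := by
    rw [mul_gaussStep hw0, gaussHat, if_neg hjw, abs_sub_comm]
  rw [gaussNumerator, if_neg hjw]
  set q : ℝ := ((gaussDigit α w w : ℤ) : ℝ)
  set a : ℝ := ((gaussDigit α w j : ℤ) : ℝ)
  calc |q * α j - a| = |q * (α j - a * α w) + a * (q * α w - 1)| := by ring_nf
    _ ≤ q * |α j - a * α w| + |a| * |q * α w - 1| := by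
        rw [← abs_of_nonneg hqw, ← abs_mul, ← abs_mul, abs_of_nonneg hqw]
        exact abs_add_le _ _
    _ = q * α w * gaussStep α w j + |a| * α w * gaussStep α w w := by rw [hj, hself]; ring
    _ ≤ 3 / 2 * M + 3 / 2 * M := by
        exact add_le_add
          (mul_le_mul (gaussDigit_self_mul_le hα) (hM j) (gaussStep_nonneg α w j) (by norm_num))
          (mul_le_mul (abs_gaussDigit_mul_le hα j) (hM w) (gaussStep_nonneg α w w) (by norm_num))
    _ = 3 * M := by ring

end GaussMap

theorem gauss_image_coordinate_lower_bound_general (N : ℕ) (τ : ℝ) (hτ : 0 < τ) :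
    ∃ k : ℝ, 0 < k ∧
      ∀ C : ℝ, 0 < C → ∀ α : Fin N → ℝ, DCN C τ α → ∀ w : Fin N,
        ∃ j, k * C * α w ^ τ ≤ gaussStep α w j := by
  refine ⟨(2 / 3 : ℝ) ^ τ / 3, by positivity, fun C hC α ⟨hα, _, hDC⟩ w => ?_⟩
  have : Nonempty (Fin N) := ⟨w⟩
  obtain ⟨m, hm⟩ := Finite.exists_max (gaussStep α w)
  refine ⟨m, ?_⟩
  have hq : (1 : ℝ) ≤ gaussDigit α w w := by exact_mod_cast one_le_gaussDigit_self (hα w)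
  obtain ⟨j, hj⟩ := hDC (gaussDigit α w w) (by exact_mod_cast (zero_lt_one.trans_le hq).ne')
    (gaussNumerator α w)
  rw [abs_of_pos (zero_lt_one.trans_le hq)] at hj
  have hlower := mul_rpow_le_div_rpow (zero_lt_one.trans_le hq) (hα w).1
    (gaussDigit_self_mul_le hα) hC.le hτ.le
  have hupper := abs_gaussDigit_mul_sub_gaussNumerator_le hα hm j
  rw [show α w / (3 / 2) = 2 / 3 * α w by ring, Real.mul_rpow (by norm_num) (hα w).1.le] at hlower
  linarith

/-- Under Moser's Diophantine condition, some coordinate of the image of the Gauss map is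
not too small: there is `k = k(N, τ) > 0` such that if `(α₁,…,α_N) ∈ DC_N(C, τ)` and
`(α̃₁,…,α̃_N) = G(α₁,…,α_N, w)`, then `α̃_j ≥ k C α_w^τ` for some index `j`. -/
theorem gauss_image_coordinate_lower_bound (N : ℕ) (hN : 2 ≤ N) (τ : ℝ) (hτ : 0 < τ) :
    ∃ k : ℝ, 0 < k ∧
      ∀ C : ℝ, 0 < C → ∀ α : Fin N → ℝ, DCN C τ α → ∀ w : Fin N,
        ∃ j, k * C * α w ^ τ ≤ gaussStep α w j :=
  gauss_image_coordinate_lower_bound_general N τ hτ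
end
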